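/- arXiv:2406.07178 — 9 statements merged into one kernel-verified Lean document; each statement's English description precedes it below -/
import Mathlib

section
/- Let E be a locally convex space, τ its topology, and σ(E,E') its weak topology. If a sequence {x_n} in E is weakly null (converges to 0 in σ(E,E')) and the set {x_n : n ∈ ω} is τ-precompact, then x_n → 0 in τ. -/
open Filter Topology Set
open scoped ENNReal Pointwise

noncomputable section

variable {E : Type*} [AddCommGroup E] [Module ℝ E] [TopologicalSpace E]

/-- Membership of a real sequence in `ℓ_p`, where the case `p = ∞` is interpreted as
membership in `c₀` (i.e. the sequence tends to `0`). -/
def SummableIn (p : ℝ≥0∞) (a : ℕ → ℝ) : Prop :=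
  (p = ∞ → Tendsto a atTop (𝓝 (0 : ℝ))) ∧ (p ≠ ∞ → Memℓp a p)

/-- A sequence of continuous functionals is weak* `p`-summable if it is pointwise `ℓ_p`. -/
def WeakStarPSummable (p : ℝ≥0∞) (χ : ℕ → E →L[ℝ] ℝ) : Prop :=
  ∀ x : E, SummableIn p fun n => χ n x

/-- `‖χ‖_A = sup { |χ x| : x ∈ A ∪ {0} }`. -/
def dualNormOn (A : Set E) (χ : E →L[ℝ] ℝ) : ℝ :=
  sSup ((fun x => |χ x|) '' (A ∪ {0}))

/-- `A` is a `(p,q)`-limited set. -/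
def PQLimited (p q : ℝ≥0∞) (A : Set E) : Prop :=
  ∀ χ : ℕ → E →L[ℝ] ℝ, WeakStarPSummable p χ →
    SummableIn q fun n => dualNormOn A (χ n)

/-- A sequence in `E` is weakly `p`-summable. -/
def WeaklyPSummable (p : ℝ≥0∞) (x : ℕ → E) : Prop :=
  ∀ χ : E →L[ℝ] ℝ, SummableIn p fun n => χ (x n)

/-- A sequence is weakly null. -/
def WeaklyNull (x : ℕ → E) : Prop :=
  ∀ χ : E →L[ℝ] ℝ, Tendsto (fun n => χ (x n)) atTop (𝓝 (0 : ℝ))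

/-- A sequence is weakly `p`-Cauchy. -/
def WeaklyPCauchy (p : ℝ≥0∞) (x : ℕ → E) : Prop :=
  ∀ k j : ℕ → ℕ, StrictMono k → StrictMono j →
    WeaklyPSummable p fun n => x (k n) - x (j n)

/-- A Cauchy sequence in a topological vector space. -/
def LCSCauchySeq (x : ℕ → E) : Prop :=
  ∀ U ∈ 𝓝 (0 : E), ∃ N : ℕ, ∀ m ≥ N, ∀ n ≥ N, x m - x n ∈ U

/-- A set is sequentially precompact if every sequence in it has a Cauchy subsequence. -/
def SeqPrecompactSet (A : Set E) : Prop :=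
  ∀ u : ℕ → E, (∀ n, u n ∈ A) → ∃ φ : ℕ → ℕ, StrictMono φ ∧ LCSCauchySeq (u ∘ φ)

/-- A set is precompact (totally bounded). -/
def PrecompactSet (A : Set E) : Prop :=
  ∀ U ∈ 𝓝 (0 : E), ∃ F : Set E, F.Finite ∧ A ⊆ F + U

/-!
Fix a neighbourhood `U` of `0`, a closed convex neighbourhood `V` with `V - V ⊆ U`, and a finite
set `F` with `range x ⊆ F + V`. A closed convex set is weakly closed (Hahn–Banach), and
`x n - f → -f` weakly; so for every `f ∈ F` with `-f ∉ V`, eventually `x n ∉ f + V`. Hence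
eventually `x n ∈ f + V` for some `f` with `-f ∈ V`, i.e. `x n ∈ V - V ⊆ U`.
-/

section

variable [IsTopologicalAddGroup E] [LocallyConvexSpace ℝ E]

theorem LocallyConvexSpace.exists_isClosed_convex_nhds_zero_subset [ContinuousConstSMul ℝ E]
    {U : Set E} (hU : U ∈ 𝓝 (0 : E)) : ∃ V ∈ 𝓝 (0 : E), IsClosed V ∧ Convex ℝ V ∧ V ⊆ U := by
  obtain ⟨W, hW, hWclosed, hWU⟩ := exists_mem_nhds_isClosed_subset hU
  obtain ⟨C, ⟨hC, hCconv⟩, hCW⟩ := (LocallyConvexSpace.convex_basis_zero ℝ E).mem_iff.mp hW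
  exact ⟨closure C, mem_of_superset hC subset_closure, isClosed_closure, hCconv.closure,
    (closure_minimal hCW hWclosed).trans hWU⟩

theorem Convex.eventually_notMem_of_forall_tendsto_dual [ContinuousSMul ℝ E]
    {ι : Type*} {l : Filter ι} {C : Set E} (hconv : Convex ℝ C) (hclosed : IsClosed C)
    {a : E} (ha : a ∉ C) {z : ι → E}
    (hz : ∀ χ : E →L[ℝ] ℝ, Tendsto (fun i => χ (z i)) l (𝓝 (χ a))) :
    ∀ᶠ i in l, z i ∉ C := by
  obtain ⟨χ, u, hχC, hua⟩ := geometric_hahn_banach_closed_point hconv hclosed ha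
  filter_upwards [(hz χ).eventually (lt_mem_nhds hua)] with i hi hiC
  exact (hχC _ hiC).not_gt hi

end

/-- If a sequence in a locally convex space is weakly null and its range is precompact in the
original topology `τ`, then it is `τ`-null. -/
theorem stmt1 {E : Type*} [AddCommGroup E] [Module ℝ E] [TopologicalSpace E]
    [IsTopologicalAddGroup E] [ContinuousSMul ℝ E] [LocallyConvexSpace ℝ E]
    (x : ℕ → E) (hw : WeaklyNull x) (hp : PrecompactSet (Set.range x)) :
    Tendsto x atTop (𝓝 (0 : E)) := by
  refine tendsto_def.2 fun U hU => ?_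
  obtain ⟨W, hW, hWU⟩ := exists_nhds_half_neg hU
  obtain ⟨V, hV, hVclosed, hVconv, hVW⟩ :=
    LocallyConvexSpace.exists_isClosed_convex_nhds_zero_subset hW
  obtain ⟨F, hF, hcover⟩ := hp V hV
  have hfar : ∀ᶠ n in atTop, ∀ f ∈ F, -f ∉ V → x n - f ∉ V := by
    refine hF.eventually_all.2 fun f _ => eventually_imp_distrib_left.2 fun hf => ?_
    refine hVconv.eventually_notMem_of_forall_tendsto_dual hVclosed hf fun χ => ?_
    simpa using (hw χ).sub_const (χ f)
  filter_upwards [hfar] with n hn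
  obtain ⟨f, hf, v, hv, hxn⟩ := hcover (mem_range_self n)
  have hvx : x n - f = v := by rw [← hxn, add_sub_cancel_left]
  have hneg : -f ∈ V := by_contra fun h => hn f hf h (hvx ▸ hv)
  simpa [← hxn, add_comm] using hWU v (hVW hv) (-f) (hVW hneg)
end
end

section
/- For 1 < p < 2, the Banach space ℓ_p does not have the weak Cauchy subsequence property of order p; in fact, the canonical unit basis {e_n} of ℓ_p has no weakly p-Cauchy subsequence. -/
open Filter Topology Set
open scoped ENNReal Pointwise

noncomputable section

variable {E : Type*} [AddCommGroup E] [Module ℝ E] [TopologicalSpace E]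

lemma exists_dual_functional (p q : ℝ≥0∞) [Fact (1 ≤ p)] (hpq : p.toReal.HolderConjugate q.toReal)
    (B : lp (fun _ : ℕ => ℝ) q) :
    ∃ χ : lp (fun _ : ℕ => ℝ) p →L[ℝ] ℝ, ∀ x, χ x = ∑' m, B m * x m := by
  have hnorm : ∀ x : lp (fun _ : ℕ => ℝ) p,
      (fun m => ‖B m * x m‖) = fun m => ‖x m‖ * ‖B m‖ := by
    intro x; funext m
    simp [Real.norm_eq_abs, abs_mul, mul_comm]
  have hsum : ∀ x : lp (fun _ : ℕ => ℝ) p, Summable fun m => B m * x m := by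
    intro x
    apply Summable.of_norm
    rw [hnorm x]
    exact lp.summable_mul hpq x B
  refine ⟨LinearMap.mkContinuous
    { toFun := fun x => ∑' m, B m * x m
      map_add' := fun x y => ?_
      map_smul' := fun c x => ?_ } ‖B‖ ?_, fun x => rfl⟩
  · rw [← Summable.tsum_add (hsum x) (hsum y)]
    apply tsum_congr
    intro m
    rw [lp.coeFn_add]
    simp [mul_add]
  · simp only [RingHom.id_apply, smul_eq_mul]
    rw [← tsum_mul_left]
    apply tsum_congr
    intro m
    rw [lp.coeFn_smul]
    simp [smul_eq_mul]
    ring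
  · intro x
    calc ‖∑' m, B m * x m‖ ≤ ∑' m, ‖B m * x m‖ := norm_tsum_le_tsum_norm (by
            rw [hnorm x]; exact lp.summable_mul hpq x B)
      _ = ∑' m, ‖x m‖ * ‖B m‖ := by rw [hnorm x]
      _ ≤ ‖x‖ * ‖B‖ := lp.tsum_mul_le_mul_norm' hpq x B
      _ = ‖B‖ * ‖x‖ := mul_comm _ _

theorem stmt2_aux (p : ℝ≥0∞) [Fact (1 ≤ p)] (hp1 : 1 < p) (hp2 : p < 2) :
    ¬ ∃ φ : ℕ → ℕ, StrictMono φ ∧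
        (∀ k j : ℕ → ℕ, StrictMono k → StrictMono j →
          ∀ χ : lp (fun _ : ℕ => ℝ) p →L[ℝ] ℝ,
            (p ≠ ∞ → Memℓp (fun n => χ ((lp.single p (φ (k n)) (1 : ℝ) : lp (fun _ : ℕ => ℝ) p)
              - lp.single p (φ (j n)) (1 : ℝ))) p)) := by
  have hp_ne_top : p ≠ ∞ := ne_top_of_lt hp2
  have hpr1 : 1 < p.toReal := by
    have := (ENNReal.toReal_lt_toReal (by simp) hp_ne_top).mpr hp1
    simpa using this
  have hpr2 : p.toReal < 2 := by
    have := (ENNReal.toReal_lt_toReal hp_ne_top (by simp)).mpr hp2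
    simpa using this
  set pr := p.toReal with hprdef
  have hpr_pos : 0 < pr := zero_lt_one.trans hpr1
  set qr := pr / (pr - 1) with hqrdef
  have hpq : pr.HolderConjugate qr := (Real.holderConjugate_iff_eq_conjExponent hpr1).mpr rfl
  have hprqr : pr < qr := by
    rw [hqrdef, lt_div_iff₀ (by linarith)]
    nlinarith
  set q : ℝ≥0∞ := ENNReal.ofReal qr with hqdef
  have hq_toReal : q.toReal = qr := ENNReal.toReal_ofReal hpq.symm.nonneg
  rintro ⟨φ, hφ, hwc⟩
  set c : ℕ → ℝ := fun n => ((n : ℝ) + 1) ^ (-(1 / pr)) with hcdef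
  have hcpos : ∀ n, 0 < c n := fun n => Real.rpow_pos_of_pos (by positivity) _
  set ψ : ℕ → ℕ := fun n => φ (2 * n + 1) with hψdef
  have hψ : StrictMono ψ := by
    intro a b h
    exact hφ (by omega)
  set b : ℕ → ℝ := Function.extend ψ c (0 : ℕ → ℝ) with hbdef
  have hbψ : ∀ n, b (ψ n) = c n := fun n => hψ.injective.extend_apply c (0 : ℕ → ℝ) n
  have hbz : ∀ m, m ∉ Set.range ψ → b m = 0 := by
    intro m hm
    rw [hbdef, Function.extend_apply' c (0 : ℕ → ℝ) m (by rintro ⟨n, hn⟩; exact hm ⟨n, hn⟩)]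
    rfl
  have hb0 : ∀ n, b (φ (2 * n)) = 0 := by
    intro n
    apply hbz
    rintro ⟨k, hk⟩
    have h2 : φ (2 * k + 1) = φ (2 * n) := hk
    have := hφ.injective h2
    omega
  have hbq : Memℓp b q := by
    apply memℓp_gen
    rw [hq_toReal]
    have hvan : ∀ m ∉ Set.range ψ, ‖b m‖ ^ qr = 0 := by
      intro m hm
      rw [hbz m hm]
      simp [Real.zero_rpow hpq.symm.ne_zero]
    rw [← Function.Injective.summable_iff hψ.injective hvan]
    have hcomp : ((fun m => ‖b m‖ ^ qr) ∘ ψ) = fun n : ℕ => ((n : ℝ) + 1) ^ (-(1 / pr) * qr) := by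
      funext n
      have h1 : ‖b (ψ n)‖ = c n := by rw [hbψ, Real.norm_eq_abs, abs_of_pos (hcpos n)]
      show ‖b (ψ n)‖ ^ qr = _
      rw [h1, hcdef]
      show (((n : ℝ) + 1) ^ (-(1 / pr))) ^ qr = _
      rw [← Real.rpow_mul (by positivity)]
    rw [hcomp]
    have base : Summable (fun n : ℕ => (n : ℝ) ^ (-(1 / pr) * qr)) := by
      apply Real.summable_nat_rpow.mpr
      have h1 : (1 : ℝ) < qr / pr := (one_lt_div hpr_pos).mpr hprqr
      have h2 : 1 / pr * qr = qr / pr := by field_simp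
      nlinarith
    have hshift := (summable_nat_add_iff 1).mpr base
    exact hshift.congr fun n => by push_cast; ring_nf
  set B : lp (fun _ : ℕ => ℝ) q := ⟨b, hbq⟩ with hBdef
  have hpq' : p.toReal.HolderConjugate q.toReal := by rw [hq_toReal]; exact hpq
  obtain ⟨χ, hχ⟩ := exists_dual_functional p q hpq' B
  have hχ_single : ∀ i, χ (lp.single p i (1 : ℝ)) = b i := by
    intro i
    rw [hχ]
    rw [tsum_eq_single i]
    · rw [lp.single_apply_self]
      simp [hBdef]
    · intro j hj
      rw [lp.single_apply_ne p i _ hj, mul_zero]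
  have hmono1 : StrictMono (fun n : ℕ => 2 * n + 1) := by
    intro a b h; show 2 * a + 1 < 2 * b + 1; omega
  have hmono2 : StrictMono (fun n : ℕ => 2 * n) := by
    intro a b h; show 2 * a < 2 * b; omega
  have hmem := hwc (fun n => 2 * n + 1) (fun n => 2 * n) hmono1 hmono2 χ hp_ne_top
  have hsum := hmem.summable hpr_pos
  have hsum' : Summable (fun n : ℕ => ((n : ℝ) + 1)⁻¹) := by
    refine hsum.congr fun n => ?_
    show ‖χ (lp.single p (φ (2 * n + 1)) 1 - lp.single p (φ (2 * n)) 1)‖ ^ pr = _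
    rw [map_sub, hχ_single, hχ_single]
    have hψn : φ (2 * n + 1) = ψ n := rfl
    rw [hψn, hbψ, hb0, sub_zero, Real.norm_eq_abs, abs_of_pos (hcpos n), hcdef]
    show (((n : ℝ) + 1) ^ (-(1 / pr))) ^ pr = _
    rw [← Real.rpow_mul (by positivity)]
    have hexp : -(1 / pr) * pr = -1 := by field_simp
    rw [hexp, Real.rpow_neg_one]
  exact Real.not_summable_natCast_inv
    ((summable_nat_add_iff 1).mp (hsum'.congr fun n => by push_cast; ring_nf))

/-- For `1 < p < 2`, the space `ℓ_p` does not have the weak Cauchy subsequence property of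
order `p`; in fact the canonical unit basis has no weakly `p`-Cauchy subsequence. -/
theorem stmt2 (p : ℝ≥0∞) [Fact (1 ≤ p)] (hp1 : 1 < p) (hp2 : p < 2) :
    (¬ ∀ x : ℕ → lp (fun _ : ℕ => ℝ) p, (∃ C : ℝ, ∀ n, ‖x n‖ ≤ C) →
        ∃ φ : ℕ → ℕ, StrictMono φ ∧ WeaklyPCauchy p (x ∘ φ)) ∧
    ¬ ∃ φ : ℕ → ℕ, StrictMono φ ∧
        WeaklyPCauchy p (fun n => (lp.single p (φ n) (1 : ℝ) : lp (fun _ : ℕ => ℝ) p)) := by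
  have hpr_pos : 0 < p.toReal :=
    ENNReal.toReal_pos (zero_lt_one.trans hp1).ne' (ne_top_of_lt hp2)
  have key : ¬ ∃ φ : ℕ → ℕ, StrictMono φ ∧
      WeaklyPCauchy p (fun n => (lp.single p (φ n) (1 : ℝ) : lp (fun _ : ℕ => ℝ) p)) := by
    rintro ⟨φ, hφ, hwc⟩
    exact stmt2_aux p hp1 hp2 ⟨φ, hφ, fun k j hk hj χ => (hwc k j hk hj χ).2⟩
  refine ⟨fun H => ?_, key⟩
  obtain ⟨φ, hφ, hwc⟩ := H (fun n => lp.single p n 1)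
    ⟨1, fun n => le_of_eq (by rw [lp.norm_single (E := fun _ : ℕ => ℝ) (zero_lt_one.trans hp1) n (1 : ℝ)]; exact norm_one)⟩
  exact key ⟨φ, hφ, hwc⟩
end
end

section
/- For 2 ≤ p < ∞, the Banach space ℓ_p has the weak Cauchy subsequence property of order p: every bounded sequence in ℓ_p has a weakly p-Cauchy subsequence. In fact every bounded sequence in ℓ_p has a weakly p-convergent subsequence. -/
open Filter Topology Set
open scoped ENNReal Pointwise

noncomputable section

variable {E : Type*} [AddCommGroup E] [Module ℝ E] [TopologicalSpace E]

lemma keyEstimate (p : ℝ≥0∞) [Fact (1 ≤ p)] (hP2 : 2 ≤ p.toReal)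
    {D : ℝ} (hD : 0 ≤ D) {a : ℕ → ℕ} (ha : StrictMono a)
    {u : ℕ → lp (fun _ : ℕ => ℝ) p}
    (hu : ∀ n i, i ∉ Finset.Ico (a n) (a (n + 1)) → u n i = 0)
    (hub : ∀ n, ‖u n‖ ≤ D)
    (χ : lp (fun _ : ℕ => ℝ) p →L[ℝ] ℝ) (s : Finset ℕ) :
    ∑ n ∈ s, ‖χ (u n)‖ ^ p.toReal ≤ (‖χ‖ * D) ^ p.toReal := by
  classical
  set P := p.toReal with hPdef
  have hP : (0:ℝ) < P := lt_of_lt_of_le two_pos hP2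
  set T := ‖χ‖ * D with hTdef
  have hT0 : 0 ≤ T := mul_nonneg (norm_nonneg _) hD
  have ht : ∀ n, ‖χ (u n)‖ ≤ T := fun n =>
    (χ.le_opNorm _).trans (mul_le_mul_of_nonneg_left (hub n) (norm_nonneg _))
  set S := ∑ n ∈ s, ‖χ (u n)‖ ^ P with hSdef
  have hS0 : 0 ≤ S := Finset.sum_nonneg fun n _ => Real.rpow_nonneg (norm_nonneg _) _
  rcases hS0.eq_or_lt with hS | hSpos
  · rw [← hS]; exact Real.rpow_nonneg hT0 _
  have hdisj : ∀ {m n : ℕ}, m ≠ n →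
      ∀ i ∈ Finset.Ico (a n) (a (n + 1)), i ∉ Finset.Ico (a m) (a (m + 1)) := by
    intro m n hmn i hi hc
    simp only [Finset.mem_Ico] at hi hc
    rcases lt_or_gt_of_ne hmn with h | h
    · exact absurd (hc.2.trans_le (ha.monotone h)) (not_lt.2 hi.1)
    · exact absurd (hi.2.trans_le (ha.monotone h)) (not_lt.2 hc.1)
  set sn := fun n => (if χ (u n) < 0 then (-1:ℝ) else 1) * ‖χ (u n)‖ ^ (P - 1) with hsndef
  have hsign : ∀ n, (if χ (u n) < 0 then (-1:ℝ) else 1) * χ (u n) = ‖χ (u n)‖ := by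
    intro n
    rcases lt_or_ge (χ (u n)) 0 with h | h
    · rw [if_pos h, Real.norm_eq_abs, abs_of_neg h]; ring
    · rw [if_neg (not_lt.2 h), Real.norm_eq_abs, abs_of_nonneg h]; ring
  have hst : ∀ n, sn n * χ (u n) = ‖χ (u n)‖ ^ P := by
    intro n
    have h1 : ‖χ (u n)‖ ^ (P - 1) * ‖χ (u n)‖ = ‖χ (u n)‖ ^ P := by
      nth_rewrite 2 [← Real.rpow_one ‖χ (u n)‖]
      rw [← Real.rpow_add' (norm_nonneg _) (by norm_num; linarith)]
      norm_num
    calc sn n * χ (u n)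
        = ‖χ (u n)‖ ^ (P - 1) * ((if χ (u n) < 0 then (-1:ℝ) else 1) * χ (u n)) := by
          rw [hsndef]; ring
      _ = ‖χ (u n)‖ ^ P := by rw [hsign n, h1]
  have hsP : ∀ n, ‖sn n‖ ^ P ≤ T ^ ((P - 2) * P) * ‖χ (u n)‖ ^ P := by
    intro n
    have habs : ‖sn n‖ = ‖χ (u n)‖ ^ (P - 1) := by
      rw [hsndef, Real.norm_eq_abs, abs_mul,
        abs_of_nonneg (Real.rpow_nonneg (norm_nonneg _) _)]
      split_ifs <;> norm_num
    rw [habs, ← Real.rpow_mul (norm_nonneg _)]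
    rw [show (P - 1) * P = P + (P - 2) * P by ring,
      Real.rpow_add' (norm_nonneg _) (by nlinarith)]
    rw [mul_comm]
    apply mul_le_mul_of_nonneg_right _ (Real.rpow_nonneg (norm_nonneg _) _)
    exact Real.rpow_le_rpow (norm_nonneg _) (ht n) (by nlinarith)
  set w := ∑ n ∈ s, sn n • u n with hwdef
  have hχw : χ w = S := by
    rw [hwdef, map_sum, hSdef]
    exact Finset.sum_congr rfl fun n _ => by rw [map_smul, smul_eq_mul, hst n]
  have hwcoe : ∀ i, w i = ∑ n ∈ s, sn n * u n i := fun i => by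
    rw [hwdef, lp.coeFn_sum, Finset.sum_apply]
    exact Finset.sum_congr rfl fun n _ => by rw [lp.coeFn_smul, Pi.smul_apply, smul_eq_mul]
  set B := s.biUnion (fun n => Finset.Ico (a n) (a (n + 1))) with hBdef
  have hwB : ∀ i ∉ B, ‖w i‖ ^ P = 0 := by
    intro i hi
    have hwi : w i = 0 := by
      rw [hwcoe]
      refine Finset.sum_eq_zero fun n hn => ?_
      rw [hu n i fun hin => hi (Finset.mem_biUnion.2 ⟨n, hn, hin⟩), mul_zero]
    rw [hwi, norm_zero, Real.zero_rpow hP.ne']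
  have hnormw : ‖w‖ ^ P = ∑ n ∈ s, ∑ i ∈ Finset.Ico (a n) (a (n + 1)), ‖w i‖ ^ P := by
    rw [lp.norm_rpow_eq_tsum hP, tsum_eq_sum hwB, hBdef, Finset.sum_biUnion]
    intro m hm n hn hmn
    exact Finset.disjoint_left.2 fun i him hin => hdisj hmn i hin him
  have hinner : ∀ n ∈ s, ∑ i ∈ Finset.Ico (a n) (a (n + 1)), ‖w i‖ ^ P
      ≤ T ^ ((P - 2) * P) * ‖χ (u n)‖ ^ P * D ^ P := by
    intro n hn
    have hwi : ∀ i ∈ Finset.Ico (a n) (a (n + 1)), w i = sn n * u n i := by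
      intro i hi
      rw [hwcoe]
      exact Finset.sum_eq_single_of_mem n hn fun m _ hmn => by
        rw [hu m i (hdisj hmn i hi), mul_zero]
    calc ∑ i ∈ Finset.Ico (a n) (a (n + 1)), ‖w i‖ ^ P
        = ‖sn n‖ ^ P * ∑ i ∈ Finset.Ico (a n) (a (n + 1)), ‖u n i‖ ^ P := by
          rw [Finset.mul_sum]
          refine Finset.sum_congr rfl fun i hi => ?_
          rw [hwi i hi, norm_mul, Real.mul_rpow (norm_nonneg _) (norm_nonneg _)]
      _ ≤ (T ^ ((P - 2) * P) * ‖χ (u n)‖ ^ P) * D ^ P := by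
          apply mul_le_mul (hsP n)
          · exact (lp.sum_rpow_le_norm_rpow hP (u n) _).trans
              (Real.rpow_le_rpow (norm_nonneg _) (hub n) hP.le)
          · exact Finset.sum_nonneg fun i _ => Real.rpow_nonneg (norm_nonneg _) _
          · exact mul_nonneg (Real.rpow_nonneg hT0 _) (Real.rpow_nonneg (norm_nonneg _) _)
      _ = T ^ ((P - 2) * P) * ‖χ (u n)‖ ^ P * D ^ P := by ring
  have hwP : ‖w‖ ^ P ≤ T ^ ((P - 2) * P) * D ^ P * S := by
    rw [hnormw, hSdef, Finset.mul_sum]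
    exact Finset.sum_le_sum fun n hn => (hinner n hn).trans_eq (by ring)
  have hSle : S ≤ ‖χ‖ * ‖w‖ := by
    calc S = χ w := hχw.symm
      _ ≤ ‖χ w‖ := le_abs_self _
      _ ≤ ‖χ‖ * ‖w‖ := χ.le_opNorm w
  have hchiD : ‖χ‖ ^ P * D ^ P = T ^ P := (Real.mul_rpow (norm_nonneg _) hD).symm
  have hTT : T ^ ((P - 2) * P) * T ^ P = (T ^ P) ^ (P - 1) := by
    rw [← Real.rpow_add' hT0 (by nlinarith),
      show (P - 2) * P + P = P * (P - 1) by ring, Real.rpow_mul hT0]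
  have hfinal : S * S ^ (P - 1) ≤ S * (T ^ P) ^ (P - 1) := by
    have h5 : S * S ^ (P - 1) = S ^ P := by
      nth_rewrite 1 [← Real.rpow_one S]
      rw [← Real.rpow_add hSpos]
      norm_num
    have h1 : S ^ P ≤ (‖χ‖ * ‖w‖) ^ P := Real.rpow_le_rpow hS0 hSle hP.le
    have h2 : (‖χ‖ * ‖w‖) ^ P = ‖χ‖ ^ P * ‖w‖ ^ P :=
      Real.mul_rpow (norm_nonneg _) (norm_nonneg _)
    have h3 : ‖χ‖ ^ P * ‖w‖ ^ P ≤ ‖χ‖ ^ P * (T ^ ((P - 2) * P) * D ^ P * S) :=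
      mul_le_mul_of_nonneg_left hwP (Real.rpow_nonneg (norm_nonneg _) _)
    have h4 : ‖χ‖ ^ P * (T ^ ((P - 2) * P) * D ^ P * S) = S * (T ^ P) ^ (P - 1) := by
      rw [← hTT, ← hchiD]; ring
    calc S * S ^ (P - 1) = S ^ P := h5
      _ ≤ (‖χ‖ * ‖w‖) ^ P := h1
      _ = ‖χ‖ ^ P * ‖w‖ ^ P := h2
      _ ≤ ‖χ‖ ^ P * (T ^ ((P - 2) * P) * D ^ P * S) := h3
      _ = S * (T ^ P) ^ (P - 1) := h4
  have h6 : S ^ (P - 1) ≤ (T ^ P) ^ (P - 1) := le_of_mul_le_mul_left hfinal hSpos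
  exact (Real.rpow_le_rpow_iff hS0 (Real.rpow_nonneg hT0 _) (by linarith)).1 h6


/-- For `2 ≤ p < ∞`, every bounded sequence in `ℓ_p` has a weakly `p`-convergent subsequence,
and in particular a weakly `p`-Cauchy subsequence; thus `ℓ_p` has the `wCSP_p`. -/
theorem stmt3 (p : ℝ≥0∞) [Fact (1 ≤ p)] (hp2 : 2 ≤ p) (hp : p ≠ ∞)
    (x : ℕ → lp (fun _ : ℕ => ℝ) p) (hb : ∃ C : ℝ, ∀ n, ‖x n‖ ≤ C) :
    ∃ φ : ℕ → ℕ, StrictMono φ ∧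
      (∃ y : lp (fun _ : ℕ => ℝ) p, WeaklyPSummable p fun n => x (φ n) - y) ∧
      WeaklyPCauchy p (x ∘ φ) := by
  classical
  obtain ⟨C, hC⟩ := hb
  have hC0 : (0:ℝ) ≤ C := (norm_nonneg _).trans (hC 0)
  have hP2 : (2:ℝ) ≤ p.toReal := by
    rw [show (2:ℝ) = (2:ℝ≥0∞).toReal by simp]
    exact ENNReal.toReal_mono hp hp2
  have hP : (0:ℝ) < p.toReal := by linarith
  have hp0 : p ≠ 0 := by
    intro h
    rw [h] at hp2
    exact absurd hp2 (by simp)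
  -- Step 1: pointwise convergent subsequence
  have hK : IsCompact (Set.univ.pi fun _ : ℕ => Icc (-C) C) :=
    isCompact_univ_pi fun _ => isCompact_Icc
  have hmem : ∀ n, (⇑(x n) : ℕ → ℝ) ∈ Set.univ.pi fun _ : ℕ => Icc (-C) C := by
    intro n
    rw [Set.mem_univ_pi]
    intro i
    have h1 := lp.norm_apply_le_norm hp0 (x n) i
    rw [Real.norm_eq_abs] at h1
    exact Set.mem_Icc.2 (abs_le.1 (h1.trans (hC n)))
  obtain ⟨g, -, φ, hφ, hconv⟩ := hK.tendsto_subseq hmem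
  have hcoord : ∀ i, Tendsto (fun n => x (φ n) i) atTop (𝓝 (g i)) := fun i =>
    tendsto_pi_nhds.1 hconv i
  have hrlim : ∀ i : ℕ, Tendsto (fun n => ‖x (φ n) i‖ ^ p.toReal) atTop
      (𝓝 (‖g i‖ ^ p.toReal)) := fun i => ((hcoord i).norm).rpow_const (Or.inr hP.le)
  have hgmem : Memℓp g p := by
    apply memℓp_gen' (C := C ^ p.toReal)
    intro s
    have hlim : Tendsto (fun n => ∑ i ∈ s, ‖x (φ n) i‖ ^ p.toReal) atTop
        (𝓝 (∑ i ∈ s, ‖g i‖ ^ p.toReal)) := tendsto_finset_sum _ fun i _ => hrlim i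
    refine le_of_tendsto hlim (Eventually.of_forall fun n => ?_)
    exact (lp.sum_rpow_le_norm_rpow hP (x (φ n)) s).trans
      (Real.rpow_le_rpow (norm_nonneg _) (hC _) hP.le)
  set y : lp (fun _ : ℕ => ℝ) p := ⟨g, hgmem⟩ with hydef
  have hynorm : ‖y‖ ≤ C := by
    apply lp.norm_le_of_forall_sum_le hP hC0
    intro s
    have hlim : Tendsto (fun n => ∑ i ∈ s, ‖x (φ n) i‖ ^ p.toReal) atTop
        (𝓝 (∑ i ∈ s, ‖g i‖ ^ p.toReal)) := tendsto_finset_sum _ fun i _ => hrlim i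
    refine le_of_tendsto hlim (Eventually.of_forall fun n => ?_)
    exact (lp.sum_rpow_le_norm_rpow hP (x (φ n)) s).trans
      (Real.rpow_le_rpow (norm_nonneg _) (hC _) hP.le)
  set z : ℕ → lp (fun _ : ℕ => ℝ) p := fun n => x (φ n) - y with hzdef
  set D := C + C with hDdef
  have hD0 : (0:ℝ) ≤ D := add_nonneg hC0 hC0
  have hzb : ∀ n, ‖z n‖ ≤ D := fun n => (norm_sub_le _ _).trans (add_le_add (hC _) hynorm)
  have hz0 : ∀ i, Tendsto (fun n => z n i) atTop (𝓝 (0:ℝ)) := by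
    intro i
    have h := (hcoord i).sub (tendsto_const_nhds (x := g i))
    rw [sub_self] at h
    exact h
  have hzsum : ∀ k, Summable fun i => ‖z k i‖ ^ p.toReal :=
    fun k => (lp.memℓp (z k)).summable hP
  -- Step 2: gliding hump selection
  have key : ∀ n m b : ℕ, ∃ kc : ℕ × ℕ, m < kc.1 ∧ b < kc.2 ∧
      (∑ i ∈ Finset.range b, ‖z kc.1 i‖ ^ p.toReal ≤ ((2:ℝ)⁻¹ ^ n) ^ p.toReal / 2) ∧
      (∑' i, (if i < kc.2 then 0 else ‖z kc.1 i‖ ^ p.toReal)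
        ≤ ((2:ℝ)⁻¹ ^ n) ^ p.toReal / 2) := by
    intro n m b
    have hδ : (0:ℝ) < ((2:ℝ)⁻¹ ^ n) ^ p.toReal / 2 := by
      have := Real.rpow_pos_of_pos (show (0:ℝ) < (2:ℝ)⁻¹ ^ n by positivity) p.toReal
      linarith
    have hhead : Tendsto (fun k => ∑ i ∈ Finset.range b, ‖z k i‖ ^ p.toReal) atTop
        (𝓝 0) := by
      have h1 : ∀ i : ℕ, Tendsto (fun k => ‖z k i‖ ^ p.toReal) atTop (𝓝 0) := by
        intro i
        have := ((hz0 i).norm).rpow_const (Or.inr hP.le)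
        simpa [Real.zero_rpow hP.ne'] using this
      simpa using tendsto_finset_sum (Finset.range b) fun i _ => h1 i
    obtain ⟨K, hK2⟩ := (Filter.eventually_atTop).1
      (hhead.eventually_lt_const hδ)
    set k := max (m + 1) K with hkdef
    have hts : ∀ c : ℕ, ∑' i, (if i < c then 0 else ‖z k i‖ ^ p.toReal)
        = (∑' i, ‖z k i‖ ^ p.toReal) - ∑ i ∈ Finset.range c, ‖z k i‖ ^ p.toReal := by
      intro c
      have hsum2 : Summable fun i => (if i < c then ‖z k i‖ ^ p.toReal else 0) :=
        summable_of_ne_finset_zero (s := Finset.range c)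
          (fun i hi => if_neg (by simpa using hi))
      have h1 : ∀ i, (if i < c then 0 else ‖z k i‖ ^ p.toReal)
          = ‖z k i‖ ^ p.toReal - (if i < c then ‖z k i‖ ^ p.toReal else 0) := by
        intro i; split_ifs <;> simp
      rw [tsum_congr h1, Summable.tsum_sub (hzsum k) hsum2,
        tsum_eq_sum (s := Finset.range c) (fun i hi => if_neg (by simpa using hi))]
      congr 1
      exact Finset.sum_congr rfl fun i hi => if_pos (by simpa using hi)
    have htail : Tendsto
        (fun c => (∑' i, ‖z k i‖ ^ p.toReal) - ∑ i ∈ Finset.range c, ‖z k i‖ ^ p.toReal)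
        atTop (𝓝 0) := by
      have h := Filter.Tendsto.sub
        (tendsto_const_nhds (x := ∑' i, ‖z k i‖ ^ p.toReal))
        (hzsum k).hasSum.tendsto_sum_nat
      rw [sub_self] at h
      exact h
    obtain ⟨c0, hc0⟩ := (Filter.eventually_atTop).1 (htail.eventually_lt_const hδ)
    refine ⟨(k, max (b + 1) c0), lt_of_lt_of_le (Nat.lt_succ_self m) (le_max_left _ _),
      lt_of_lt_of_le (Nat.lt_succ_self b) (le_max_left _ _), ?_, ?_⟩
    · exact (hK2 k (le_max_right _ _)).le
    · rw [hts]
      exact (hc0 _ (le_max_right _ _)).le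
  choose F hF1 hF2 hF3 hF4 using key
  set G : ℕ → ℕ × ℕ := fun n => Nat.rec (F 0 0 0) (fun n ih => F (n + 1) ih.1 ih.2) n
    with hGdef
  set ψ : ℕ → ℕ := fun n => (G n).1 with hψdef
  set a : ℕ → ℕ := fun n => Nat.rec 0 (fun m _ => (G m).2) n with hadef
  have hGs : ∀ n, G (n + 1) = F (n + 1) (G n).1 (G n).2 := fun n => rfl
  have hψmono : StrictMono ψ := by
    apply strictMono_nat_of_lt_succ
    intro n
    have := hF1 (n + 1) (G n).1 (G n).2
    rw [← hGs n] at this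
    exact this
  have hamono : StrictMono a := by
    apply strictMono_nat_of_lt_succ
    intro n
    cases n with
    | zero => exact hF2 0 0 0
    | succ m =>
      have := hF2 (m + 1) (G m).1 (G m).2
      rw [← hGs m] at this
      exact this
  have hhead : ∀ n, ∑ i ∈ Finset.range (a n), ‖z (ψ n) i‖ ^ p.toReal
      ≤ ((2:ℝ)⁻¹ ^ n) ^ p.toReal / 2 := by
    intro n
    cases n with
    | zero => exact hF3 0 0 0
    | succ m =>
      have := hF3 (m + 1) (G m).1 (G m).2
      rw [← hGs m] at this
      exact this
  have htail : ∀ n, ∑' i, (if i < a (n + 1) then 0 else ‖z (ψ n) i‖ ^ p.toReal)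
      ≤ ((2:ℝ)⁻¹ ^ n) ^ p.toReal / 2 := by
    intro n
    cases n with
    | zero => exact hF4 0 0 0
    | succ m =>
      have := hF4 (m + 1) (G m).1 (G m).2
      rw [← hGs m] at this
      exact this
  -- Step 3: the disjointly supported blocks
  have humem : ∀ n, Memℓp (fun i => if i ∈ Finset.Ico (a n) (a (n + 1))
      then z (ψ n) i else 0) p := by
    intro n
    apply memℓp_gen' (C := ‖z (ψ n)‖ ^ p.toReal)
    intro s
    refine le_trans (Finset.sum_le_sum fun i _ => ?_) (lp.sum_rpow_le_norm_rpow hP _ s)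
    split_ifs with h
    · exact le_refl _
    · rw [norm_zero, Real.zero_rpow hP.ne']
      exact Real.rpow_nonneg (norm_nonneg _) _
  set u : ℕ → lp (fun _ : ℕ => ℝ) p := fun n => ⟨_, humem n⟩ with hudef
  have hucoe : ∀ n i, u n i = if i ∈ Finset.Ico (a n) (a (n + 1)) then z (ψ n) i else 0 :=
    fun n i => rfl
  have hu0 : ∀ n i, i ∉ Finset.Ico (a n) (a (n + 1)) → u n i = 0 := fun n i h => by
    rw [hucoe, if_neg h]
  have hub : ∀ n, ‖u n‖ ≤ D := by
    intro n
    apply lp.norm_le_of_forall_sum_le hP hD0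
    intro s
    refine le_trans (Finset.sum_le_sum fun i _ => ?_)
      ((lp.sum_rpow_le_norm_rpow hP (z (ψ n)) s).trans
        (Real.rpow_le_rpow (norm_nonneg _) (hzb _) hP.le))
    rw [hucoe]
    split_ifs with h
    · exact le_refl _
    · rw [norm_zero, Real.zero_rpow hP.ne']
      exact Real.rpow_nonneg (norm_nonneg _) _
  have hzu : ∀ n, ‖z (ψ n) - u n‖ ≤ (2:ℝ)⁻¹ ^ n := by
    intro n
    have hε : (0:ℝ) < (2:ℝ)⁻¹ ^ n := by positivity
    rw [← Real.rpow_le_rpow_iff (norm_nonneg _) hε.le hP, lp.norm_rpow_eq_tsum hP]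
    have hb1 : ∀ i, ‖(z (ψ n) - u n) i‖ ^ p.toReal ≤
        (if i < a n then ‖z (ψ n) i‖ ^ p.toReal else 0)
        + (if i < a (n + 1) then 0 else ‖z (ψ n) i‖ ^ p.toReal) := by
      intro i
      have hcoe : (z (ψ n) - u n) i = z (ψ n) i - u n i := rfl
      by_cases h1 : i ∈ Finset.Ico (a n) (a (n + 1))
      · rw [hcoe, hucoe, if_pos h1, sub_self, norm_zero, Real.zero_rpow hP.ne']
        apply add_nonneg <;> split_ifs <;>
          first
            | exact le_refl _
            | exact Real.rpow_nonneg (norm_nonneg _) _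
      · rw [hcoe, hucoe, if_neg h1, sub_zero]
        rw [Finset.mem_Ico, not_and_or, not_le, not_lt] at h1
        rcases h1 with h | h
        · rw [if_pos h, if_pos (lt_of_lt_of_le h (hamono.monotone (Nat.le_succ n)))]
          simp
        · rw [if_neg (not_lt.2 h),
            if_neg (not_lt.2 (le_trans (hamono.monotone (Nat.le_succ n)) h))]
          simp
    have hsum1 : Summable fun i => (if i < a n then ‖z (ψ n) i‖ ^ p.toReal else 0) :=
      summable_of_ne_finset_zero (s := Finset.range (a n))
        (fun i hi => if_neg (by simpa using hi))
    have hsum2 : Summable fun i => (if i < a (n + 1) then 0 else ‖z (ψ n) i‖ ^ p.toReal) := by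
      refine Summable.of_nonneg_of_le (fun i => ?_) (fun i => ?_) (hzsum (ψ n))
      · split_ifs
        · exact le_refl _
        · exact Real.rpow_nonneg (norm_nonneg _) _
      · split_ifs
        · exact Real.rpow_nonneg (norm_nonneg _) _
        · exact le_refl _
    calc ∑' i, ‖(z (ψ n) - u n) i‖ ^ p.toReal
        ≤ ∑' i, ((if i < a n then ‖z (ψ n) i‖ ^ p.toReal else 0)
          + (if i < a (n + 1) then 0 else ‖z (ψ n) i‖ ^ p.toReal)) :=
          Summable.tsum_le_tsum hb1 ((lp.memℓp _).summable hP) (hsum1.add hsum2)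
      _ = (∑' i, (if i < a n then ‖z (ψ n) i‖ ^ p.toReal else 0))
          + ∑' i, (if i < a (n + 1) then 0 else ‖z (ψ n) i‖ ^ p.toReal) :=
          Summable.tsum_add hsum1 hsum2
      _ ≤ ((2:ℝ)⁻¹ ^ n) ^ p.toReal / 2 + ((2:ℝ)⁻¹ ^ n) ^ p.toReal / 2 := by
          apply add_le_add _ (htail n)
          rw [tsum_eq_sum (s := Finset.range (a n)) (fun i hi => if_neg (by simpa using hi))]
          refine le_trans (le_of_eq (Finset.sum_congr rfl fun i hi =>
            if_pos (by simpa using hi))) (hhead n)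
      _ = ((2:ℝ)⁻¹ ^ n) ^ p.toReal := by ring
  -- Step 4: weak p-summability of the blocks
  have hWPS : ∀ χ : lp (fun _ : ℕ => ℝ) p →L[ℝ] ℝ,
      Memℓp (fun n => χ (z (ψ n))) p := by
    intro χ
    have h1 : Memℓp (fun n => χ (u n)) p :=
      memℓp_gen' (keyEstimate p hP2 hD0 hamono hu0 hub χ)
    have h2 : Memℓp (fun n => χ (z (ψ n) - u n)) p := by
      apply memℓp_gen
      refine Summable.of_nonneg_of_le
        (fun n => Real.rpow_nonneg (norm_nonneg _) _) (fun n => ?_)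
        ((summable_geometric_of_lt_one
          (Real.rpow_nonneg (by norm_num : (0:ℝ) ≤ 2⁻¹) p.toReal)
          (Real.rpow_lt_one (by norm_num : (0:ℝ) ≤ 2⁻¹) (by norm_num : (2:ℝ)⁻¹ < 1)
            hP)).mul_left (‖χ‖ ^ p.toReal))
      have hbn : ‖χ (z (ψ n) - u n)‖ ≤ ‖χ‖ * (2:ℝ)⁻¹ ^ n :=
        (χ.le_opNorm _).trans (mul_le_mul_of_nonneg_left (hzu n) (norm_nonneg _))
      calc ‖χ (z (ψ n) - u n)‖ ^ p.toReal
          ≤ (‖χ‖ * (2:ℝ)⁻¹ ^ n) ^ p.toReal :=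
            Real.rpow_le_rpow (norm_nonneg _) hbn hP.le
        _ = ‖χ‖ ^ p.toReal * ((2:ℝ)⁻¹ ^ p.toReal) ^ n := by
            rw [Real.mul_rpow (norm_nonneg _) (by positivity),
              ← Real.rpow_natCast ((2:ℝ)⁻¹) n, ← Real.rpow_natCast ((2:ℝ)⁻¹ ^ p.toReal) n,
              ← Real.rpow_mul (by norm_num), ← Real.rpow_mul (by norm_num),
              mul_comm (n : ℝ) p.toReal, mul_comm]
    have hfeq : (fun n => χ (z (ψ n)))
        = (fun n => χ (u n)) + fun n => χ (z (ψ n) - u n) := by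
      funext n
      rw [Pi.add_apply, ← map_add]
      congr 1
      abel
    rw [hfeq]
    exact h1.add h2
  -- Conclusion
  refine ⟨φ ∘ ψ, hφ.comp hψmono, ⟨y, fun χ => ⟨fun h => absurd h hp, fun _ => ?_⟩⟩,
    fun k j hk hj χ => ⟨fun h => absurd h hp, fun _ => ?_⟩⟩
  · exact hWPS χ
  · have h1 : Memℓp ((fun n => χ (z (ψ n))) ∘ k) p :=
      memℓp_gen (((hWPS χ).summable hP).comp_injective hk.injective)
    have h2 : Memℓp ((fun n => χ (z (ψ n))) ∘ j) p :=
      memℓp_gen (((hWPS χ).summable hP).comp_injective hj.injective)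
    have hfeq : (fun n => χ ((x ∘ (φ ∘ ψ)) (k n) - (x ∘ (φ ∘ ψ)) (j n)))
        = ((fun n => χ (z (ψ n))) ∘ k) - ((fun n => χ (z (ψ n))) ∘ j) := by
      funext n
      simp only [Pi.sub_apply, Function.comp_apply]
      rw [← map_sub]
      congr 1
      show x (φ (ψ (k n))) - x (φ (ψ (j n)))
        = (x (φ (ψ (k n))) - y) - (x (φ (ψ (j n))) - y)
      abel
    rw [hfeq]
    exact h1.sub h2
end
end

section
/- Let p ∈ [1,∞] and let {E_i}_{i∈ω} be a countable family of locally convex spaces. The product E = ∏_{i∈ω} E_i has the weak Cauchy subsequence property of order p if and only if every factor E_i has the weak Cauchy subsequence property of order p. -/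
open Filter Topology Set
open scoped ENNReal Pointwise

noncomputable section

variable {E : Type*} [AddCommGroup E] [Module ℝ E] [TopologicalSpace E]

/-- A locally convex space has the weak Cauchy subsequence property of order `p` if every
bounded sequence has a weakly `p`-Cauchy subsequence. -/
def HasWCSP (p : ℝ≥0∞) (F : Type*) [AddCommGroup F] [Module ℝ F] [TopologicalSpace F] : Prop :=
  ∀ x : ℕ → F, Bornology.IsVonNBounded ℝ (Set.range x) →
    ∃ φ : ℕ → ℕ, StrictMono φ ∧ WeaklyPCauchy p (x ∘ φ)

set_option linter.unusedSectionVars false in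
lemma summableIn_of_shift {p : ℝ≥0∞} (hp : 1 ≤ p) (a : ℕ → ℝ) (N : ℕ)
    (h : SummableIn p fun n => a (n + N)) : SummableIn p a := by
  constructor
  · intro hinf
    exact (tendsto_add_atTop_iff_nat N).mp (h.1 hinf)
  · intro hne
    have hpt : 0 < p.toReal :=
      ENNReal.toReal_pos (fun h0 => by simp [h0] at hp) hne
    have := (memℓp_gen_iff hpt).mp (h.2 hne)
    exact memℓp_gen ((summable_nat_add_iff N).mp this)

lemma SummableIn.add {p : ℝ≥0∞} {a b : ℕ → ℝ} (ha : SummableIn p a) (hb : SummableIn p b) :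
    SummableIn p (fun n => a n + b n) := by
  constructor
  · intro hinf
    simpa using (ha.1 hinf).add (hb.1 hinf)
  · intro hne
    exact (ha.2 hne).add (hb.2 hne)

lemma summableIn_zero {p : ℝ≥0∞} : SummableIn p (fun _ => (0 : ℝ)) := by
  refine ⟨fun _ => tendsto_const_nhds, fun _ => ?_⟩
  exact zero_memℓp

lemma summableIn_sum {p : ℝ≥0∞} {ι : Type*} (s : Finset ι) (f : ι → ℕ → ℝ)
    (h : ∀ i ∈ s, SummableIn p (f i)) :
    SummableIn p (fun n => ∑ i ∈ s, f i n) := by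
  classical
  induction s using Finset.induction_on with
  | empty => simpa using summableIn_zero
  | insert c t hx ih =>
    simp only [Finset.sum_insert hx]
    exact (h c (Finset.mem_insert_self c t)).add
      (ih fun i hi => h i (Finset.mem_insert_of_mem hi))

section Aux
variable {E : ℕ → Type*} [∀ i, AddCommGroup (E i)] [∀ i, Module ℝ (E i)]
  [∀ i, TopologicalSpace (E i)] [∀ i, IsTopologicalAddGroup (E i)]
  [∀ i, ContinuousSMul ℝ (E i)]

/-- Bundled continuous linear `Pi.single`. -/
def mySingle (i : ℕ) : E i →L[ℝ] ∀ j, E j :=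
  { LinearMap.single ℝ E i with
    cont := continuous_single i }

@[simp] lemma mySingle_apply (i : ℕ) (v : E i) : mySingle (E := E) i v = Pi.single i v := rfl

/-- Every continuous linear functional on a countable product depends on finitely many
coordinates. -/
lemma dual_factor (χ : (∀ i, E i) →L[ℝ] ℝ) :
    ∃ s : Finset ℕ, ∀ x : ∀ i, E i, χ x = ∑ i ∈ s, χ (Pi.single i (x i)) := by
  classical
  have h1 : χ ⁻¹' (Metric.ball (0 : ℝ) 1) ∈ 𝓝 (0 : ∀ i, E i) := by
    have := χ.continuous.continuousAt (x := (0 : ∀ i, E i))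
    have h0 : χ 0 = 0 := map_zero χ
    have := this.preimage_mem_nhds (by rw [h0]; exact Metric.ball_mem_nhds _ one_pos)
    exact this
  rw [nhds_pi] at h1
  obtain ⟨I, hIfin, t, ht, hsub⟩ := (Filter.mem_pi).mp h1
  refine ⟨hIfin.toFinset, ?_⟩
  have hker : ∀ y : ∀ i, E i, (∀ i ∈ I, y i = 0) → χ y = 0 := by
    intro y hy
    by_contra hne
    have hmem : (2 / χ y) • y ∈ I.pi t := by
      intro i hi
      simp only [Pi.smul_apply, hy i hi, smul_zero]
      exact mem_of_mem_nhds (ht i)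
    have := hsub hmem
    simp only [mem_preimage, Metric.mem_ball, dist_zero_right] at this
    rw [map_smul, smul_eq_mul, div_mul_cancel₀ _ hne] at this
    norm_num at this
  intro x
  set w : ∀ i, E i := ∑ i ∈ hIfin.toFinset, Pi.single i (x i) with hw
  have hxw : χ (x - w) = 0 := by
    refine hker _ ?_
    intro i hi
    have hi' : i ∈ hIfin.toFinset := hIfin.mem_toFinset.mpr hi
    simp only [Pi.sub_apply, hw, Finset.sum_apply, Finset.sum_pi_single, if_pos hi', sub_self]
  have : χ x = χ w := by
    have := map_sub χ x w
    rw [hxw] at this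
    linarith [this]
  rw [this, hw, map_sum]

/-- Abstract diagonal argument. -/
lemma diagonal_subseq (P : ℕ → (ℕ → ℕ) → Prop)
    (hP : ∀ i (σ : ℕ → ℕ), StrictMono σ → ∃ ρ, StrictMono ρ ∧ P i (σ ∘ ρ)) :
    ∃ ψ : ℕ → ℕ, StrictMono ψ ∧
      ∀ i, ∃ σ θ : ℕ → ℕ, StrictMono σ ∧ StrictMono θ ∧ P i σ ∧ ∀ n, ψ (n + i) = σ (θ n) := by
  classical
  choose ρ hρ1 hρ2 using hP
  let step : ℕ → {f : ℕ → ℕ // StrictMono f} → {f : ℕ → ℕ // StrictMono f} :=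
    fun n f => ⟨f.1 ∘ ρ (n + 1) f.1 f.2, f.2.comp (hρ1 _ _ _)⟩
  let Φ : ℕ → {f : ℕ → ℕ // StrictMono f} :=
    fun i => Nat.rec ⟨id ∘ ρ 0 id strictMono_id, strictMono_id.comp (hρ1 _ _ _)⟩ step i
  have hΦP : ∀ i, P i (Φ i).1 := by
    intro i
    cases i with
    | zero => exact hρ2 0 id strictMono_id
    | succ n => exact hρ2 (n + 1) (Φ n).1 (Φ n).2
  have chain : ∀ i d, ∃ θ : ℕ → ℕ, StrictMono θ ∧ (Φ (i + d)).1 = (Φ i).1 ∘ θ := by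
    intro i d
    induction d with
    | zero => exact ⟨id, strictMono_id, rfl⟩
    | succ d ih =>
      obtain ⟨θ, hθ, heq⟩ := ih
      refine ⟨θ ∘ ρ (i + d + 1) (Φ (i + d)).1 (Φ (i + d)).2, hθ.comp (hρ1 _ _ _), ?_⟩
      funext m
      exact congrFun heq _
  set ψ : ℕ → ℕ := fun n => (Φ n).1 n with hψdef
  have hψ : StrictMono ψ := by
    apply strictMono_nat_of_lt_succ
    intro n
    have h1 : ψ n < (Φ n).1 (n + 1) := (Φ n).2 (lt_add_one n)
    have h2 : (Φ n).1 (n + 1) ≤ (Φ n).1 (ρ (n + 1) (Φ n).1 (Φ n).2 (n + 1)) :=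
      (Φ n).2.monotone (hρ1 (n + 1) (Φ n).1 (Φ n).2).le_apply
    exact lt_of_lt_of_le h1 h2
  refine ⟨ψ, hψ, ?_⟩
  intro i
  choose θs hθmono hθeq using chain i
  refine ⟨(Φ i).1, fun n => θs n (n + i), (Φ i).2, ?_, hΦP i, ?_⟩
  · have key : ∀ n, ψ (n + i) = (Φ i).1 (θs n (n + i)) := by
      intro n
      have : ψ (n + i) = (Φ (i + n)).1 (n + i) := by rw [hψdef]; rw [add_comm n i]
      rw [this, hθeq n]
      rfl
    intro a b hab
    have := hψ (by omega : a + i < b + i)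
    rw [key a, key b] at this
    exact (Φ i).2.lt_iff_lt.mp this
  · intro n
    have : ψ (n + i) = (Φ (i + n)).1 (n + i) := by rw [hψdef]; rw [add_comm n i]
    rw [this, hθeq n]
    rfl

end Aux

/-- A countable product of locally convex spaces has the `wCSP_p` iff each factor does. -/
theorem stmt4 (p : ℝ≥0∞) (hp : 1 ≤ p) {E : ℕ → Type*}
    [∀ i, AddCommGroup (E i)] [∀ i, Module ℝ (E i)] [∀ i, TopologicalSpace (E i)]
    [∀ i, IsTopologicalAddGroup (E i)] [∀ i, ContinuousSMul ℝ (E i)]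
    [∀ i, LocallyConvexSpace ℝ (E i)] :
    HasWCSP p (∀ i, E i) ↔ ∀ i, HasWCSP p (E i) := by
  constructor
  · intro h i x hx
    have hb : Bornology.IsVonNBounded ℝ
        (Set.range (fun n => Pi.single i (x n) : ℕ → ∀ j, E j)) := by
      refine (hx.image (mySingle (E := E) i)).subset ?_
      rintro _ ⟨n, rfl⟩
      exact ⟨x n, mem_range_self n, rfl⟩
    obtain ⟨φ, hφ, hC⟩ := h _ hb
    refine ⟨φ, hφ, ?_⟩
    intro k j hk hj χ
    have key := hC k j hk hj (χ.comp (ContinuousLinearMap.proj i))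
    have heq : (fun n => (χ.comp (ContinuousLinearMap.proj i))
        (((fun n => Pi.single i (x n) : ℕ → ∀ j, E j) ∘ φ) (k n)
          - ((fun n => Pi.single i (x n) : ℕ → ∀ j, E j) ∘ φ) (j n)))
        = fun n => χ ((x ∘ φ) (k n) - (x ∘ φ) (j n)) := by
      funext n
      simp [Function.comp, Pi.single_eq_same]
    exact heq ▸ key
  · intro h x hx
    set P : ℕ → (ℕ → ℕ) → Prop := fun i σ => WeaklyPCauchy p (fun n => x (σ n) i) with hPdef
    have hP : ∀ i (σ : ℕ → ℕ), StrictMono σ → ∃ ρ, StrictMono ρ ∧ P i (σ ∘ ρ) := by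
      intro i σ hσ
      have hb : Bornology.IsVonNBounded ℝ (Set.range fun n => x (σ n) i) := by
        refine (hx.image (ContinuousLinearMap.proj (R := ℝ) (φ := E) i)).subset ?_
        rintro _ ⟨n, rfl⟩
        exact ⟨x (σ n), mem_range_self _, rfl⟩
      obtain ⟨ρ, hρ, hw⟩ := h i (fun n => x (σ n) i) hb
      exact ⟨ρ, hρ, hw⟩
    obtain ⟨ψ, hψ, hdiag⟩ := diagonal_subseq P hP
    refine ⟨ψ, hψ, ?_⟩
    intro k j hk hj χ
    obtain ⟨s, hs⟩ := dual_factor χ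
    have hform : (fun n => χ ((x ∘ ψ) (k n) - (x ∘ ψ) (j n)))
        = fun n => ∑ i ∈ s,
            (χ.comp (mySingle (E := E) i)) (x (ψ (k n)) i - x (ψ (j n)) i) := by
      funext n
      rw [hs]
      refine Finset.sum_congr rfl fun i _ => ?_
      simp [Function.comp]
    rw [hform]
    refine summableIn_sum s _ fun i _ => ?_
    obtain ⟨σ, θ, hσ, hθ, hPi, hψσ⟩ := hdiag i
    refine summableIn_of_shift hp _ i ?_
    have hle : ∀ (f : ℕ → ℕ), StrictMono f → ∀ n, i ≤ f (n + i) := fun f hf n =>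
      le_trans (Nat.le_add_left i n) hf.le_apply
    have hk' : StrictMono fun n => θ (k (n + i) - i) := by
      intro a b hab
      apply hθ
      have h1 := hle k hk a
      have h2 := hk (by omega : a + i < b + i)
      omega
    have hj' : StrictMono fun n => θ (j (n + i) - i) := by
      intro a b hab
      apply hθ
      have h1 := hle j hj a
      have h2 := hj (by omega : a + i < b + i)
      omega
    have key := hPi (fun n => θ (k (n + i) - i)) (fun n => θ (j (n + i) - i)) hk' hj'
      (χ.comp (mySingle (E := E) i))
    have heq : ∀ m, i ≤ m → ψ m = σ (θ (m - i)) := by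
      intro m hm
      have := hψσ (m - i)
      rwa [Nat.sub_add_cancel hm] at this
    show SummableIn p fun n => (χ.comp (mySingle (E := E) i))
      (x (ψ (k (n + i))) i - x (ψ (j (n + i))) i)
    have hfun : (fun n => (χ.comp (mySingle (E := E) i))
        (x (ψ (k (n + i))) i - x (ψ (j (n + i))) i))
        = fun n => (χ.comp (mySingle (E := E) i))
            (x (σ (θ (k (n + i) - i))) i - x (σ (θ (j (n + i) - i))) i) := by
      funext n
      rw [heq _ (hle k hk n), heq _ (hle j hj n)]
    exact hfun ▸ key
end
end

section
/- Let 1 ≤ p ≤ q ≤ ∞ and let (E,τ) be a locally convex space carrying its weak topology (i.e. τ = σ(E,E')). Then every bounded subset A of E is a (p,q)-E-limited set: for every equicontinuous weak* p-summable sequence {χ_n} in E', the sequence (sup_{a∈A} |⟨χ_n,a⟩|)_n belongs to ℓ_q (to c_0 if q = ∞). -/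
/-!
Since `τ = σ(E, E')`, the neighbourhood `U` on which all `χ n` are bounded by `1` contains the
common kernel of finitely many functionals `φ₁, …, φₖ`; being a subspace, that kernel is killed
by every `χ n`. A generalised inverse `S` of `x ↦ (φᵢ x)ᵢ` then gives points `uᵢ = S eᵢ` with
`χ n x = ∑ᵢ φᵢ x * χ n uᵢ` for all `n` at once. Each `φᵢ` is bounded by some `Cᵢ` on the bounded
set `A`, so `sup_A |χ n| ≤ ∑ᵢ Cᵢ |χ n uᵢ|`, a finite sum of sequences in `ℓ_p ⊆ ℓ_q`.
-/

open Filter Topology Set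
open scoped ENNReal Pointwise

noncomputable section

variable {E : Type*} [AddCommGroup E] [Module ℝ E] [TopologicalSpace E]

theorem Memℓp.tendsto_cofinite_zero {α F : Type*} [NormedAddCommGroup F] {p : ℝ≥0∞}
    {f : α → F} (hf : Memℓp f p) (hp : p ≠ ∞) : Tendsto f cofinite (𝓝 0) := by
  rcases p.trichotomy with rfl | rfl | hp₀
  · exact tendsto_const_nhds.congr' <| hf.finite_dsupport.eventually_cofinite_notMem.mono
      fun i hi => (not_not.1 hi).symm
  · exact absurd rfl hp
  · have hpow := (hf.summable hp₀).tendsto_cofinite_zero.rpow_const (p := p.toReal⁻¹)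
      (Or.inr (inv_nonneg.2 hp₀.le))
    rw [Real.zero_rpow (inv_ne_zero hp₀.ne')] at hpow
    refine tendsto_zero_iff_norm_tendsto_zero.2 (hpow.congr fun i => ?_)
    exact Real.rpow_rpow_inv (norm_nonneg _) hp₀.ne'

namespace SummableIn

variable {p q : ℝ≥0∞} {a b : ℕ → ℝ}

theorem of_exponent_ge (h : SummableIn p a) (hpq : p ≤ q) : SummableIn q a := by
  refine ⟨fun hq => ?_, fun hq => (h.2 (ne_top_of_le_ne_top hq hpq)).of_exponent_ge hpq⟩
  by_cases hp : p = ∞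
  · exact h.1 hp
  · exact Nat.cofinite_eq_atTop ▸ (h.2 hp).tendsto_cofinite_zero hp

theorem mono (hb : SummableIn p b) (hab : ∀ n, |a n| ≤ b n) : SummableIn p a :=
  ⟨fun hp => squeeze_zero_norm hab (hb.1 hp), fun hp => (hb.2 hp).mono hab⟩

theorem abs (h : SummableIn p a) : SummableIn p fun n => |a n| :=
  ⟨fun hp => by simpa using (h.1 hp).abs, fun hp => (h.2 hp).norm⟩

theorem const_mul (h : SummableIn p a) (c : ℝ) : SummableIn p fun n => c * a n :=
  ⟨fun hp => by simpa using (h.1 hp).const_mul c, fun hp => (h.2 hp).const_mul c⟩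

theorem finset_sum {ι : Type*} (s : Finset ι) {f : ι → ℕ → ℝ}
    (h : ∀ i ∈ s, SummableIn p (f i)) : SummableIn p fun n => ∑ i ∈ s, f i n :=
  ⟨fun hp => by simpa using tendsto_finsetSum s fun i hi => (h i hi).1 hp,
    fun hp => by simpa using Memℓp.finsetSum s fun i hi => (h i hi).2 hp⟩

end SummableIn

theorem LinearMap.exists_comp_comp_eq_self {K V W : Type*} [DivisionRing K] [AddCommGroup V]
    [Module K V] [AddCommGroup W] [Module K W] (T : V →ₗ[K] W) :
    ∃ S : W →ₗ[K] V, T ∘ₗ S ∘ₗ T = T := by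
  obtain ⟨R, hR⟩ := T.rangeRestrict.exists_rightInverse_of_surjective T.range_rangeRestrict
  obtain ⟨S, hS⟩ := LinearMap.exists_extend R
  refine ⟨S, LinearMap.ext fun x => ?_⟩
  have hTx : S (T x) = R (T.rangeRestrict x) := congr($hS (T.rangeRestrict x))
  simpa [hTx] using congr(((T.range.subtype) ($hR (T.rangeRestrict x))))

theorem LinearMap.exists_eq_sum_mul_of_iInf_ker_le_ker {K V ι : Type*} [Field K]
    [AddCommGroup V] [Module K V] [Fintype ι] (φ : ι → V →ₗ[K] K) :
    ∃ u : ι → V, ∀ f : V →ₗ[K] K, ⨅ i, ker (φ i) ≤ ker f →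
      ∀ x, f x = ∑ i, φ i x * f (u i) := by
  classical
  obtain ⟨S, hS⟩ := (LinearMap.pi φ).exists_comp_comp_eq_self
  refine ⟨fun i => S (Pi.single i 1), fun f hf x => ?_⟩
  have hker : x - S (LinearMap.pi φ x) ∈ ker (LinearMap.pi φ) := by
    simpa [sub_eq_zero] using congr($hS x).symm
  rw [LinearMap.ker_pi] at hker
  have hfx : f x = f (S (LinearMap.pi φ x)) := sub_eq_zero.1 (by simpa using hf hker)
  rw [hfx, pi_eq_sum_univ' (LinearMap.pi φ x)]
  simp

theorem exists_finset_of_mem_nhds_iInf_induced {X ι : Type*} {Y : ι → Type*}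
    [∀ i, TopologicalSpace (Y i)] (f : ∀ i, X → Y i) {x : X} {U : Set X}
    (hU : U ∈ @nhds X (⨅ i, TopologicalSpace.induced (f i) inferInstance) x) :
    ∃ s : Finset ι, ∀ y, (∀ i ∈ s, f i y = f i x) → y ∈ U := by
  rw [nhds_iInf, Filter.mem_iInf] at hU
  obtain ⟨I, hI, V, hV, rfl⟩ := hU
  refine ⟨hI.toFinset, fun y hy => mem_iInter.2 fun i => ?_⟩
  obtain ⟨W, hW, hWV⟩ := (nhds_induced (f i) x ▸ hV i : V i ∈ comap (f i) (𝓝 (f i x)))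
  exact hWV (by simpa [hy i (hI.mem_toFinset.2 i.2)] using mem_of_mem_nhds hW)

theorem LinearMap.eq_zero_of_abs_le_one_of_forall_smul_mem {E : Type*} [AddCommGroup E]
    [Module ℝ E] (g : E →ₗ[ℝ] ℝ) {U : Set E} (hg : ∀ x ∈ U, |g x| ≤ 1) {y : E}
    (hy : ∀ r : ℝ, r • y ∈ U) : g y = 0 := by
  by_contra hne
  have h := hg _ (hy (2 * (g y)⁻¹))
  rw [map_smul, smul_eq_mul, mul_assoc, inv_mul_cancel₀ hne] at h
  norm_num at h

theorem dualNormOn_nonneg (A : Set E) (χ : E →L[ℝ] ℝ) : 0 ≤ dualNormOn A χ :=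
  Real.sSup_nonneg <| forall_mem_image.2 fun _ _ => abs_nonneg _

theorem dualNormOn_le {A : Set E} {χ : E →L[ℝ] ℝ} {b : ℝ} (hb₀ : 0 ≤ b)
    (hb : ∀ x ∈ A, |χ x| ≤ b) : dualNormOn A χ ≤ b := by
  refine csSup_le ((union_nonempty.2 (Or.inr (singleton_nonempty 0))).image _)
    (forall_mem_image.2 ?_)
  rintro x (hx | rfl)
  exacts [hb x hx, by simpa using hb₀]

theorem dualNormOn_le_sum {ι : Type*} [Fintype ι] {A : Set E} {χ : E →L[ℝ] ℝ}
    {φ : ι → E →L[ℝ] ℝ} {c C : ι → ℝ} (hχ : ∀ x, χ x = ∑ i, φ i x * c i) (hC₀ : ∀ i, 0 ≤ C i)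
    (hC : ∀ i, ∀ x ∈ A, |φ i x| ≤ C i) : dualNormOn A χ ≤ ∑ i, C i * |c i| := by
  refine dualNormOn_le (Finset.sum_nonneg fun i _ => by have := hC₀ i; positivity) fun x hx => ?_
  calc |χ x| = |∑ i, φ i x * c i| := congrArg abs (hχ x)
    _ ≤ ∑ i, |φ i x| * |c i| :=
        (Finset.abs_sum_le_sum_abs _ _).trans_eq (Finset.sum_congr rfl fun _ _ => abs_mul _ _)
    _ ≤ ∑ i, C i * |c i| := by
      gcongr with i
      exact hC i x hx

theorem stmt7_general {E : Type*} [AddCommGroup E] [Module ℝ E] [t : TopologicalSpace E]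
    (hw : t = ⨅ χ : E →L[ℝ] ℝ, TopologicalSpace.induced χ inferInstance)
    (p q : ℝ≥0∞) (hpq : p ≤ q)
    (A : Set E) (hA : Bornology.IsVonNBounded ℝ A)
    (χ : ℕ → E →L[ℝ] ℝ)
    (hequi : ∃ U ∈ 𝓝 (0 : E), ∀ n : ℕ, ∀ x ∈ U, |χ n x| ≤ 1)
    (hsum : WeakStarPSummable p χ) :
    SummableIn q fun n => dualNormOn A (χ n) := by
  obtain ⟨U, hU, hχU⟩ := hequi
  obtain ⟨s, hs⟩ := exists_finset_of_mem_nhds_iInf_induced (fun φ : E →L[ℝ] ℝ => ⇑φ) (hw ▸ hU)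
  have hker (n : ℕ) :
      ⨅ φ : s, LinearMap.ker (φ : E →ₗ[ℝ] ℝ) ≤ LinearMap.ker (χ n : E →ₗ[ℝ] ℝ) := by
    intro y hy
    simp only [Submodule.mem_iInf, LinearMap.mem_ker, ContinuousLinearMap.coe_coe] at hy
    refine (χ n : E →ₗ[ℝ] ℝ).eq_zero_of_abs_le_one_of_forall_smul_mem (hχU n) fun r => hs _ ?_
    intro φ hφ
    simp [hy ⟨φ, hφ⟩]
  obtain ⟨u, hu⟩ := LinearMap.exists_eq_sum_mul_of_iInf_ker_le_ker fun φ : s => (φ : E →ₗ[ℝ] ℝ)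
  choose C hC₀ hC using fun φ : s =>
    ((NormedSpace.isVonNBounded_iff ℝ).1 (hA.image (φ : E →L[ℝ] ℝ))).exists_pos_norm_le
  refine ((SummableIn.finset_sum Finset.univ fun φ _ =>
    ((hsum (u φ)).of_exponent_ge hpq).abs.const_mul (C φ))).mono fun n => ?_
  rw [abs_of_nonneg (dualNormOn_nonneg A (χ n))]
  exact dualNormOn_le_sum (hu _ (hker n)) (fun φ => (hC₀ φ).le)
    fun φ x hx => hC φ _ (mem_image_of_mem _ hx)

/-- If a locally convex space carries its weak topology, then every bounded set is
`(p,q)`-`E`-limited: for every equicontinuous weak* `p`-summable sequence of functionals, the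
sequence of sups over `A` lies in `ℓ_q` (`c₀` if `q = ∞`). -/
theorem stmt7 {E : Type*} [AddCommGroup E] [Module ℝ E] [t : TopologicalSpace E]
    [IsTopologicalAddGroup E] [ContinuousSMul ℝ E] [LocallyConvexSpace ℝ E]
    (hw : t = ⨅ χ : E →L[ℝ] ℝ, TopologicalSpace.induced χ inferInstance)
    (p q : ℝ≥0∞) (hp : 1 ≤ p) (hpq : p ≤ q)
    (A : Set E) (hA : Bornology.IsVonNBounded ℝ A)
    (χ : ℕ → E →L[ℝ] ℝ)
    (hequi : ∃ U ∈ 𝓝 (0 : E), ∀ n : ℕ, ∀ x ∈ U, |χ n x| ≤ 1)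
    (hsum : WeakStarPSummable p χ) :
    SummableIn q fun n => dualNormOn A (χ n) :=
  stmt7_general (t := t) hw p q hpq A hA χ hequi hsum
end
end

section
/- Let 1 ≤ p ≤ q ≤ ∞, let E be a locally convex space, and let L be a closed linear subspace of E. If E has the Gelfand–Phillips property of order (p,q) (every (p,q)-limited subset of E is relatively compact), then L has the Gelfand–Phillips property of order (p,q). -/
open Filter Topology Set
open scoped ENNReal Pointwise

noncomputable section

variable {E : Type*} [AddCommGroup E] [Module ℝ E] [TopologicalSpace E]

/-- `E` has the Gelfand–Phillips property of order `(p,q)`: every `(p,q)`-limited set is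
relatively compact. -/
def HasGP (p q : ℝ≥0∞) (F : Type*) [AddCommGroup F] [Module ℝ F] [TopologicalSpace F] : Prop :=
  ∀ A : Set F, PQLimited p q A → IsCompact (closure A)

/-- A closed subspace of a locally convex space with the `GP_{(p,q)}` property also has the
`GP_{(p,q)}` property. -/
theorem stmt8 {E : Type*} [AddCommGroup E] [Module ℝ E] [TopologicalSpace E]
    [IsTopologicalAddGroup E] [ContinuousSMul ℝ E] [LocallyConvexSpace ℝ E]
    (p q : ℝ≥0∞) (hp : 1 ≤ p) (hpq : p ≤ q)
    (L : Submodule ℝ E) (hL : IsClosed (L : Set E))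
    (h : HasGP p q E) : HasGP p q L := by
  intro A hA
  set ι : L →L[ℝ] E := L.subtypeL with hι
  -- the image of A in E is (p,q)-limited
  have hA' : PQLimited p q ((↑) '' A : Set E) := by
    intro χ hχ
    have key : ∀ n, dualNormOn ((↑) '' A : Set E) (χ n)
        = dualNormOn A ((χ n).comp ι) := by
      intro n
      unfold dualNormOn
      congr 1
      have h0 : ((↑) '' A ∪ {0} : Set E) = (↑) '' (A ∪ {0} : Set L) := by
        rw [Set.image_union, Set.image_singleton]
        simp
      rw [h0, ← Set.image_comp]
      rfl
    have hχ' : WeakStarPSummable p fun n => (χ n).comp ι := fun x => hχ (x : E)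
    have := hA (fun n => (χ n).comp ι) hχ'
    simpa only [key] using this
  have hcomp : IsCompact (closure ((↑) '' A : Set E)) := h _ hA'
  -- pull the compactness back along the closed embedding
  have hemb : Topology.IsEmbedding ((↑) : L → E) := Topology.IsEmbedding.subtypeVal
  have hclsub : closure ((↑) '' A : Set E) ⊆ (L : Set E) := by
    apply closure_minimal _ hL
    rintro x ⟨a, _, rfl⟩
    exact a.2
  have himg : ((↑) : L → E) '' closure A = closure ((↑) '' A : Set E) := by
    apply Set.Subset.antisymm
    · exact image_closure_subset_closure_image continuous_subtype_val
    · intro x hx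
      refine ⟨⟨x, hclsub hx⟩, ?_, rfl⟩
      rw [hemb.closure_eq_preimage_closure_image]
      exact hx
  rw [hemb.isCompact_iff, himg]
  exact hcomp
end
end

section
/- Let p, q, q' ∈ [1,∞] with q' ≤ q, and let E be a locally convex space. Then E has the p-Gelfand–Phillips sequentially compact property of order (q',q) — that is, every weakly p-summable sequence in E which is a (q',q)-limited set is null in the original topology — if and only if every weakly sequentially p-precompact (q',q)-limited subset A of E is sequentially precompact in E. -/
open Filter Topology Set
open scoped ENNReal Pointwise

noncomputable section

variable {E : Type*} [AddCommGroup E] [Module ℝ E] [TopologicalSpace E]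

/-- A set is weakly sequentially `p`-precompact if every sequence in it has a weakly `p`-Cauchy
subsequence. -/
def WSeqPPrecompact (p : ℝ≥0∞) (A : Set E) : Prop :=
  ∀ u : ℕ → E, (∀ n, u n ∈ A) → ∃ φ : ℕ → ℕ, StrictMono φ ∧ WeaklyPCauchy p (u ∘ φ)

section AuxSeq

variable {p q : ℝ≥0∞} {a b : ℕ → ℝ}

theorem SummableIn.tendsto_zero (h : SummableIn p a) : Tendsto a atTop (𝓝 (0 : ℝ)) := by
  by_cases hp : p = ∞
  · exact h.1 hp
  have hm := h.2 hp
  rcases p.trichotomy with rfl | rfl | hlt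
  · have hfin := memℓp_zero_iff.1 hm
    have hev : ∀ᶠ n in atTop, a n = 0 := by
      rcases hfin.bddAbove with ⟨N, hN⟩
      filter_upwards [eventually_gt_atTop N] with n hn
      by_contra h0
      exact absurd (hN (Set.mem_setOf.2 h0)) (not_le.2 hn)
    exact Tendsto.congr' (hev.mono fun n hn => hn.symm) tendsto_const_nhds
  · exact absurd rfl hp
  · have hs : Summable fun n => ‖a n‖ ^ p.toReal := (memℓp_gen_iff hlt).1 hm
    have h1 : Tendsto (fun n => ‖a n‖ ^ p.toReal) atTop (𝓝 0) := hs.tendsto_atTop_zero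
    have h2 : Tendsto (fun n => (‖a n‖ ^ p.toReal) ^ (p.toReal)⁻¹) atTop (𝓝 0) := by
      have hc : ContinuousAt (fun s : ℝ => s ^ (p.toReal)⁻¹) 0 :=
        Real.continuousAt_rpow_const 0 _ (Or.inr (by positivity))
      have := hc.tendsto.comp h1
      rwa [Real.zero_rpow (by positivity)] at this
    have h3 : (fun n => (‖a n‖ ^ p.toReal) ^ (p.toReal)⁻¹) = fun n => ‖a n‖ := by
      funext n
      exact Real.rpow_rpow_inv (norm_nonneg _) hlt.ne'
    rw [h3] at h2
    exact tendsto_zero_iff_norm_tendsto_zero.2 h2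

theorem SummableIn.bdd (h : SummableIn p a) : ∃ C, 0 ≤ C ∧ ∀ n, |a n| ≤ C := by
  have hbdd : BddAbove (Set.range fun n => ‖a n‖) := by
    by_cases hp : p = ∞
    · exact ((h.1 hp).norm.bddAbove_range)
    · exact memℓp_infty_iff.1 ((h.2 hp).of_exponent_ge le_top)
  obtain ⟨C, hC⟩ := hbdd
  exact ⟨max C 0, le_max_right _ _, fun n =>
    le_trans (le_trans (le_of_eq (Real.norm_eq_abs (a n)).symm) (hC ⟨n, rfl⟩)) (le_max_left _ _)⟩

theorem summableIn_of_eq_zero (h : ∀ n, a n = 0) : SummableIn p a := by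
  have ha : a = fun _ => (0 : ℝ) := funext h
  subst ha
  exact ⟨fun _ => tendsto_const_nhds, fun _ => zero_mem_ℓp'⟩

theorem SummableIn.sub (ha : SummableIn p a) (hb : SummableIn p b) :
    SummableIn p fun n => a n - b n := by
  refine ⟨fun hp => ?_, fun hp => ?_⟩
  · simpa using (ha.1 hp).sub (hb.1 hp)
  · exact (ha.2 hp).sub (hb.2 hp)

theorem SummableIn.comp_strictMono {s : ℕ → ℕ} (h : SummableIn p a) (hs : StrictMono s) :
    SummableIn p fun n => a (s n) := by
  refine ⟨fun hp => (h.1 hp).comp hs.tendsto_atTop, fun hp => ?_⟩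
  have hm := h.2 hp
  rcases p.trichotomy with rfl | rfl | hlt
  · refine memℓp_zero ?_
    have : {n | a (s n) ≠ 0} ⊆ s ⁻¹' {m | a m ≠ 0} := fun n hn => hn
    exact Set.Finite.subset ((memℓp_zero_iff.1 hm).preimage hs.injective.injOn) this
  · exact absurd rfl hp
  · refine (memℓp_gen_iff hlt).2 ?_
    exact ((memℓp_gen_iff hlt).1 hm).comp_injective hs.injective

theorem summableIn_of_le {f g : ℕ → ℝ} (hg : SummableIn q g) (h0 : ∀ n, 0 ≤ f n)
    (hle : ∀ n, f n ≤ 2 * g n) : SummableIn q f := by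
  have hg0 : ∀ n, 0 ≤ g n := fun n => by nlinarith [h0 n, hle n]
  refine ⟨fun hq => ?_, fun hq => ?_⟩
  · have h2g : Tendsto (fun n => 2 * g n) atTop (𝓝 (0 : ℝ)) := by
      simpa using (hg.1 hq).const_mul 2
    exact squeeze_zero h0 hle h2g
  have hm := hg.2 hq
  rcases q.trichotomy with rfl | rfl | hlt
  · refine memℓp_zero ?_
    refine Set.Finite.subset (memℓp_zero_iff.1 hm) fun n hn => ?_
    simp only [Set.mem_setOf_eq] at hn ⊢
    intro hgn
    exact hn (le_antisymm (by simpa [hgn] using hle n) (h0 n))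
  · exact absurd rfl hq
  · refine (memℓp_gen_iff hlt).2 ?_
    have hsum : Summable fun n => 2 ^ q.toReal * ‖g n‖ ^ q.toReal :=
      ((memℓp_gen_iff hlt).1 hm).mul_left _
    refine Summable.of_nonneg_of_le (fun n => Real.rpow_nonneg (norm_nonneg _) _)
      (fun n => ?_) hsum
    have h1 : ‖f n‖ ≤ 2 * g n := by
      rw [Real.norm_of_nonneg (h0 n)]; exact hle n
    calc ‖f n‖ ^ q.toReal ≤ (2 * g n) ^ q.toReal :=
          Real.rpow_le_rpow (norm_nonneg _) h1 hlt.le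
      _ = 2 ^ q.toReal * ‖g n‖ ^ q.toReal := by
          rw [Real.mul_rpow (by norm_num) (hg0 n), Real.norm_of_nonneg (hg0 n)]

end AuxSeq

section AuxE

variable {A : Set E} {χ : E →L[ℝ] ℝ} {C : ℝ}

theorem dualNormOn_bounds (hC : 0 ≤ C) (h : ∀ x ∈ A, |χ x| ≤ C) :
    (0 ≤ dualNormOn A χ ∧ dualNormOn A χ ≤ C) ∧ ∀ x ∈ A, |χ x| ≤ dualNormOn A χ := by
  have hub : ∀ r ∈ (fun x => |χ x|) '' (A ∪ {0}), r ≤ C := by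
    rintro r ⟨x, hx | hx, rfl⟩
    · exact h x hx
    · simp only [Set.mem_singleton_iff] at hx
      simp [hx, hC]
  have hbdd : BddAbove ((fun x => |χ x|) '' (A ∪ {0})) := ⟨C, hub⟩
  have hne : (0 : ℝ) ∈ (fun x => |χ x|) '' (A ∪ {0}) :=
    ⟨0, Or.inr rfl, by simp⟩
  refine ⟨⟨le_csSup hbdd hne, csSup_le ⟨0, hne⟩ hub⟩, fun x hx => ?_⟩
  exact le_csSup hbdd ⟨x, Or.inl hx, rfl⟩

/-- Every continuous functional is bounded on a weakly sequentially `p`-precompact set. -/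
theorem bdd_on_of_wseq {p : ℝ≥0∞} (hA : WSeqPPrecompact p A) (χ : E →L[ℝ] ℝ) :
    ∃ C, 0 ≤ C ∧ ∀ x ∈ A, |χ x| ≤ C := by
  by_contra hcon
  push_neg at hcon
  have hsel : ∀ n : ℕ, ∃ x, x ∈ A ∧ ((n : ℝ) * n) < |χ x| := by
    intro n
    obtain ⟨x, hx1, hx2⟩ := hcon ((n : ℝ) * n) (by positivity)
    exact ⟨x, hx1, hx2⟩
  choose a ha1 ha2 using hsel
  obtain ⟨φ, hφ, hwpc⟩ := hA a ha1
  have hsm1 : StrictMono (fun n : ℕ => n + 1) := fun m n h => Nat.add_lt_add_right h 1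
  have hsum := (hwpc (fun n => n + 1) id hsm1 strictMono_id) χ
  obtain ⟨C, hC0, hCb⟩ := hsum.bdd
  set c0 : ℝ := |χ (a (φ 0))| with hc0
  obtain ⟨n, hn⟩ := exists_nat_gt (c0 + C)
  have hc00 : 0 ≤ c0 := abs_nonneg _
  have hn1 : (1 : ℝ) ≤ (n : ℝ) := by
    have : (0 : ℝ) < (n : ℝ) := lt_of_le_of_lt (by positivity) hn
    exact_mod_cast Nat.one_le_iff_ne_zero.2 (by exact_mod_cast this.ne')
  -- telescoping bound : |χ (a (φ n))| ≤ c0 + n * C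
  have htel : ∀ m : ℕ, |χ (a (φ m))| ≤ c0 + m * C := by
    intro m
    have hsum_eq : χ (a (φ m)) - χ (a (φ 0)) =
        ∑ i ∈ Finset.range m, (χ (a (φ (i + 1))) - χ (a (φ i))) := by
      rw [Finset.sum_range_sub (fun i => χ (a (φ i)))]
    have hbnd : |χ (a (φ m)) - χ (a (φ 0))| ≤ m * C := by
      rw [hsum_eq]
      calc |∑ i ∈ Finset.range m, (χ (a (φ (i + 1))) - χ (a (φ i)))|
          ≤ ∑ i ∈ Finset.range m, |χ (a (φ (i + 1))) - χ (a (φ i))| :=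
            Finset.abs_sum_le_sum_abs _ _
        _ ≤ ∑ _i ∈ Finset.range m, C := by
            refine Finset.sum_le_sum fun i _ => ?_
            have := hCb i
            simpa [map_sub] using this
        _ = m * C := by simp [mul_comm]
    calc |χ (a (φ m))| ≤ |χ (a (φ m)) - χ (a (φ 0))| + |χ (a (φ 0))| := by
          have := abs_sub_abs_le_abs_sub (χ (a (φ m))) (χ (a (φ 0)))
          linarith [abs_sub_abs_le_abs_sub (χ (a (φ m))) (χ (a (φ 0)))]
      _ ≤ c0 + m * C := by rw [hc0]; linarith
  have hgrow : ((φ n : ℕ) : ℝ) * (φ n) < |χ (a (φ n))| := ha2 (φ n)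
  have hphin : (n : ℝ) ≤ (φ n : ℝ) := by exact_mod_cast hφ.le_apply
  have hsq : (n : ℝ) * n ≤ ((φ n : ℕ) : ℝ) * (φ n) := by
    have h0n : (0 : ℝ) ≤ (n : ℝ) := by positivity
    nlinarith
  have hfin : (n : ℝ) * n < c0 + n * C := lt_of_le_of_lt hsq (lt_of_lt_of_le hgrow (htel n))
  nlinarith

end AuxE

section AuxHB

variable [IsTopologicalAddGroup E] [ContinuousSMul ℝ E] [LocallyConvexSpace ℝ E]

/-- A closed convex set is weakly sequentially closed. -/
theorem mem_of_weak_tendsto {V : Set E} (hconv : Convex ℝ V) (hcl : IsClosed V)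
    {w : ℕ → E} (hw : ∀ n, w n ∈ V) {y : E}
    (h : ∀ χ : E →L[ℝ] ℝ, Tendsto (fun n => χ (w n)) atTop (𝓝 (χ y))) : y ∈ V := by
  by_contra hy
  obtain ⟨f, u, hfa, hfy⟩ := geometric_hahn_banach_closed_point hconv hcl hy
  have hle : f y ≤ u := le_of_tendsto (h f) (Eventually.of_forall fun n => (hfa _ (hw n)).le)
  linarith

/-- Inside every neighbourhood of zero there is a closed convex set which is itself a
neighbourhood-absorbing pair. -/
theorem exists_closed_convex_nhd {U : Set E} (hU : U ∈ 𝓝 (0 : E)) :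
    ∃ C V : Set E, C ∈ 𝓝 (0 : E) ∧ Convex ℝ V ∧ IsClosed V ∧ C ⊆ V ∧ V ⊆ U := by
  obtain ⟨W, hW, hWc, hWU⟩ := exists_mem_nhds_isClosed_subset hU
  obtain ⟨S, ⟨hS, hSconv⟩, hSW⟩ := (LocallyConvexSpace.convex_basis_zero ℝ E).mem_iff.1 hW
  exact ⟨S, closure S, hS, hSconv.closure, isClosed_closure, subset_closure,
    (closure_minimal hSW hWc).trans hWU⟩

end AuxHB

/-- `E` has the `p`-Gelfand–Phillips sequentially compact property of order `(q',q)` iff every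
weakly sequentially `p`-precompact `(q',q)`-limited subset of `E` is sequentially precompact. -/
theorem stmt11 {E : Type*} [AddCommGroup E] [Module ℝ E] [TopologicalSpace E]
    [IsTopologicalAddGroup E] [ContinuousSMul ℝ E] [LocallyConvexSpace ℝ E]
    (p q' q : ℝ≥0∞) (hq : q' ≤ q) :
    (∀ x : ℕ → E, WeaklyPSummable p x → PQLimited q' q (Set.range x) →
      Tendsto x atTop (𝓝 (0 : E))) ↔
    (∀ A : Set E, WSeqPPrecompact p A → PQLimited q' q A → SeqPrecompactSet A) := by
  constructor
  · -- Gelfand–Phillips ⇒ limited w.seq.p-precompact sets are sequentially precompact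
    intro H A hA hlim u hu
    obtain ⟨φ, hφ, hwpc⟩ := hA u hu
    refine ⟨φ, hφ, ?_⟩
    by_contra hnc
    unfold LCSCauchySeq at hnc
    push_neg at hnc
    obtain ⟨U, hU, hsel⟩ := hnc
    have hsel' : ∀ N : ℕ, ∃ mn : ℕ × ℕ, N ≤ mn.1 ∧ N ≤ mn.2 ∧
        (u ∘ φ) mn.1 - (u ∘ φ) mn.2 ∉ U := by
      intro N
      obtain ⟨m, hm, n, hn, h⟩ := hsel N
      exact ⟨(m, n), hm, hn, h⟩
    choose f hf1 hf2 hf3 using hsel'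
    set g : ℕ → ℕ := fun i => Nat.rec 0 (fun _ N => max (f N).1 (f N).2 + 1) i with hgdef
    have hgsucc : ∀ i, g (i + 1) = max (f (g i)).1 (f (g i)).2 + 1 := fun i => rfl
    set k : ℕ → ℕ := fun i => (f (g i)).1 with hkdef
    set j : ℕ → ℕ := fun i => (f (g i)).2 with hjdef
    have hk : StrictMono k := strictMono_nat_of_lt_succ fun i => by
      have h1 : g (i + 1) ≤ k (i + 1) := hf1 (g (i + 1))
      have h2 : k i < g (i + 1) := by
        rw [hgsucc]; exact Nat.lt_succ_of_le (le_max_left _ _)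
      omega
    have hj : StrictMono j := strictMono_nat_of_lt_succ fun i => by
      have h1 : g (i + 1) ≤ j (i + 1) := hf2 (g (i + 1))
      have h2 : j i < g (i + 1) := by
        rw [hgsucc]; exact Nat.lt_succ_of_le (le_max_right _ _)
      omega
    set z : ℕ → E := fun i => (u ∘ φ) (k i) - (u ∘ φ) (j i) with hzdef
    have hzU : ∀ i, z i ∉ U := fun i => hf3 (g i)
    have hz : WeaklyPSummable p z := hwpc k j hk hj
    have hbd := bdd_on_of_wseq hA
    have hzlim : PQLimited q' q (Set.range z) := by
      intro χs hχs
      have hAl := hlim χs hχs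
      have key : ∀ n, 0 ≤ dualNormOn (Set.range z) (χs n) ∧
          dualNormOn (Set.range z) (χs n) ≤ 2 * dualNormOn A (χs n) := by
        intro n
        obtain ⟨C, hC0, hCb⟩ := hbd (χs n)
        obtain ⟨⟨hA0, _⟩, hAmem⟩ := dualNormOn_bounds hC0 hCb
        have hzb : ∀ x ∈ Set.range z, |(χs n) x| ≤ 2 * dualNormOn A (χs n) := by
          rintro _ ⟨i, rfl⟩
          have h1 : |(χs n) ((u ∘ φ) (k i))| ≤ dualNormOn A (χs n) :=
            hAmem _ (hu (φ (k i)))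
          have h2 : |(χs n) ((u ∘ φ) (j i))| ≤ dualNormOn A (χs n) :=
            hAmem _ (hu (φ (j i)))
          have h3 : |(χs n) (z i)| ≤ |(χs n) ((u ∘ φ) (k i))| + |(χs n) ((u ∘ φ) (j i))| := by
            rw [hzdef, map_sub]
            exact abs_sub _ _
          linarith
        obtain ⟨⟨hz0, hzle⟩, _⟩ := dualNormOn_bounds (by linarith) hzb
        exact ⟨hz0, hzle⟩
      exact summableIn_of_le hAl (fun n => (key n).1) (fun n => (key n).2)
    have hz0 := H z hz hzlim
    have hev : ∀ᶠ i in atTop, z i ∈ U := hz0 hU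
    obtain ⟨i, hi⟩ := hev.exists
    exact hzU i hi
  · -- converse
    intro H x hx hlim
    by_contra hnot
    rw [Filter.tendsto_def] at hnot
    push_neg at hnot
    obtain ⟨U, hU, hne⟩ := hnot
    have hfreq : ∃ᶠ n in atTop, x n ∉ U := by
      refine Filter.not_eventually.1 ?_
      exact hne
    obtain ⟨φ, hφ, hφU⟩ := extraction_of_frequently_atTop hfreq
    -- the range of `x` is weakly sequentially `p`-precompact
    have hwsp : WSeqPPrecompact p (Set.range x) := by
      intro u hu
      choose g hg using hu
      by_cases hb : ∃ m, ∀ N, ∃ n, N ≤ n ∧ g n = m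
      · obtain ⟨m, hm⟩ := hb
        have hfr : ∀ N, ∃ n > N, g n = m := by
          intro N
          obtain ⟨n, hn1, hn2⟩ := hm (N + 1)
          exact ⟨n, by omega, hn2⟩
        obtain ⟨ψ, hψ, hψm⟩ := extraction_of_frequently_atTop (frequently_atTop'.2 hfr)
        refine ⟨ψ, hψ, ?_⟩
        intro k j hk hj χ
        refine summableIn_of_eq_zero fun n => ?_
        have e1 : (u ∘ ψ) (k n) = x m := by
          rw [Function.comp_apply, ← hg (ψ (k n)), hψm (k n)]
        have e2 : (u ∘ ψ) (j n) = x m := by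
          rw [Function.comp_apply, ← hg (ψ (j n)), hψm (j n)]
        simp only [Function.comp_apply] at e1 e2
        simp [e1, e2]
      · push_neg at hb
        have hfin : ∀ m, {n | g n = m}.Finite := by
          intro m
          obtain ⟨N, hN⟩ := hb m
          refine Set.Finite.subset (Set.finite_Iio N) fun n hn => ?_
          by_contra hlt
          exact hN n (not_lt.1 hlt) hn
        have hfin2 : ∀ b, {n | g n < b}.Finite := by
          intro b
          have hsub : {n | g n < b} ⊆ ⋃ m ∈ Set.Iio b, {n | g n = m} := fun n hn =>
            Set.mem_biUnion hn rfl
          exact Set.Finite.subset (Set.Finite.biUnion (Set.finite_Iio b) fun m _ => hfin m) hsub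
        have hstep : ∀ i : ℕ, ∃ n, i < n ∧ g i < g n := by
          intro i
          obtain ⟨N, hN⟩ := (hfin2 (g i + 1)).bddAbove
          refine ⟨max (N + 1) (i + 1), by omega, ?_⟩
          by_contra hcon
          have hmem : max (N + 1) (i + 1) ∈ {n | g n < g i + 1} := by
            simp only [Set.mem_setOf_eq]
            omega
          have := hN hmem
          omega
        choose F hF1 hF2 using hstep
        set ψ : ℕ → ℕ := fun i => Nat.rec 0 (fun _ prev => F prev) i with hψdef
        have hψs : ∀ i, ψ (i + 1) = F (ψ i) := fun i => rfl
        have hψ : StrictMono ψ := strictMono_nat_of_lt_succ fun i => by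
          rw [hψs]; exact hF1 (ψ i)
        have hgψ : StrictMono (g ∘ ψ) := strictMono_nat_of_lt_succ fun i => by
          show g (ψ i) < g (ψ (i + 1))
          rw [hψs]; exact hF2 (ψ i)
        refine ⟨ψ, hψ, ?_⟩
        intro k j hk hj χ
        have hcong : (fun n => χ ((u ∘ ψ) (k n) - (u ∘ ψ) (j n))) =
            fun n => χ (x ((g ∘ ψ) (k n))) - χ (x ((g ∘ ψ) (j n))) := by
          funext n
          simp only [map_sub, Function.comp_apply, ← hg]
        rw [hcong]
        exact ((hx χ).comp_strictMono (hgψ.comp hk)).sub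
          ((hx χ).comp_strictMono (hgψ.comp hj))
    have hpre := H (Set.range x) hwsp hlim
    obtain ⟨ψ, hψ, hcauchy⟩ := hpre (x ∘ φ) fun n => ⟨φ n, rfl⟩
    obtain ⟨Cnh, V, hCnh, hVconv, hVcl, hCV, hVU⟩ := exists_closed_convex_nhd hU
    obtain ⟨N, hN⟩ := hcauchy Cnh hCnh
    set y : ℕ → E := fun m => x (φ (ψ m)) with hydef
    have hw : ∀ n, y N - y (n + N) ∈ V := fun n =>
      hCV (hN N le_rfl (n + N) (Nat.le_add_left N n))
    have hweak : ∀ χ : E →L[ℝ] ℝ,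
        Tendsto (fun n => χ (y N - y (n + N))) atTop (𝓝 (χ (y N))) := by
      intro χ
      have h0 : Tendsto (fun m => χ (x m)) atTop (𝓝 0) := (hx χ).tendsto_zero
      have h1 : Tendsto (fun m => χ (y m)) atTop (𝓝 0) :=
        h0.comp ((hφ.comp hψ).tendsto_atTop)
      have h2 : Tendsto (fun n => χ (y (n + N))) atTop (𝓝 0) :=
        h1.comp (tendsto_add_atTop_nat N)
      have h3 : Tendsto (fun n => χ (y N) - χ (y (n + N))) atTop (𝓝 (χ (y N) - 0)) :=
        tendsto_const_nhds.sub h2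
      simp only [map_sub, sub_zero] at h3 ⊢
      exact h3
    have hmem : y N ∈ V := mem_of_weak_tendsto hVconv hVcl hw hweak
    exact hφU (ψ N) (hVU hmem)
end
end

section
/- Let E be a locally convex space satisfying: for every infinite bounded separated subset D of E and every δ > 0 there exist a sequence {x_n} in D and a weak* null sequence {f_n} in E' such that |f_n(x_k)| < δ and |f_n(x_n)| > 1 + δ for all k < n. Then for any infinite bounded separated set D in E there exists a continuous linear operator T : E → c_0 such that T(D) is not totally bounded in the Banach space c_0. -/
open Filter Topology Set
open scoped ENNReal Pointwise

noncomputable section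

variable {E : Type*} [AddCommGroup E] [Module ℝ E] [TopologicalSpace E]

/-- A set `D` is separated if there is a neighborhood `U` of zero with `d - d' ∉ U` for all
distinct `d, d' ∈ D`. -/
def SeparatedSet (D : Set E) : Prop :=
  ∃ U ∈ 𝓝 (0 : E), ∀ d ∈ D, ∀ d' ∈ D, d ≠ d' → d - d' ∉ U

/-- If for every infinite bounded separated set `D` and every `δ > 0` one can find a sequence in
`D` and a weak* null sequence of functionals as in the hypothesis, then for every infinite
bounded separated set `D` there is a linear operator `T : E → c₀`, continuous into the topology
of pointwise convergence, such that `T(D)` is not totally bounded in the Banach space `c₀`. -/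
theorem stmt14 {E : Type*} [AddCommGroup E] [Module ℝ E] [TopologicalSpace E]
    [IsTopologicalAddGroup E] [ContinuousSMul ℝ E] [LocallyConvexSpace ℝ E]
    (h : ∀ D : Set E, D.Infinite → Bornology.IsVonNBounded ℝ D → SeparatedSet D →
      ∀ δ : ℝ, 0 < δ → ∃ x : ℕ → E, (∀ n, x n ∈ D) ∧
        ∃ f : ℕ → E →L[ℝ] ℝ, (∀ y : E, Tendsto (fun n => f n y) atTop (𝓝 (0 : ℝ))) ∧
          ∀ k n : ℕ, k < n → |f n (x k)| < δ ∧ |f n (x n)| > 1 + δ)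
    (D : Set E) (hD : D.Infinite) (hb : Bornology.IsVonNBounded ℝ D) (hs : SeparatedSet D) :
    ∃ T : E →ₗ[ℝ] ZeroAtInftyContinuousMap ℕ ℝ,
      (∀ n : ℕ, Continuous fun x : E => (T x) n) ∧
      ¬ TotallyBounded ((fun x => T x) '' D) := by
  obtain ⟨x, hx, f, hf0, hf⟩ := h D hD hb hs 1 one_pos
  set T : E →ₗ[ℝ] ZeroAtInftyContinuousMap ℕ ℝ :=
    { toFun := fun y => ⟨⟨fun n => f n y, continuous_of_discreteTopology⟩, by
        simpa [cocompact_eq_atTop] using hf0 y⟩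
      map_add' := by intro a b; ext n; simp
      map_smul' := by intro c a; ext n; simp } with hT
  refine ⟨T, fun n => (f n).continuous, ?_⟩
  intro hTB
  rw [Metric.totallyBounded_iff] at hTB
  obtain ⟨t, ht, hcov⟩ := hTB (1/2) (by norm_num)
  have hmem : ∀ n : ℕ, ∃ c ∈ t, T (x n) ∈ Metric.ball c (1/2) := by
    intro n
    have : T (x n) ∈ ⋃ y ∈ t, Metric.ball y (1/2) := hcov ⟨x n, hx n, rfl⟩
    simpa using this
  choose c hct hball using hmem
  have : ∃ m n : ℕ, m ≠ n ∧ c m = c n := by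
    haveI := ht.to_subtype
    obtain ⟨m, n, hmn, he⟩ :=
      Finite.exists_ne_map_eq_of_infinite (fun n : ℕ => (⟨c n, hct n⟩ : t))
    exact ⟨m, n, hmn, congrArg Subtype.val he⟩
  obtain ⟨m, n, hmn, hce⟩ := this
  -- wlog m < n
  wlog hlt : m < n generalizing m n
  · exact this n m hmn.symm hce.symm ((hmn.lt_or_gt).resolve_left hlt)
  have hclose : dist (T (x m)) (T (x n)) < 1 := by
    calc dist (T (x m)) (T (x n)) ≤ dist (T (x m)) (c m) + dist (c m) (T (x n)) :=
          dist_triangle _ _ _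
      _ < 1/2 + 1/2 := by
          refine add_lt_add (hball m) ?_
          rw [hce, dist_comm]; exact hball n
      _ = 1 := by norm_num
  have hfar : (1 : ℝ) ≤ dist (T (x m)) (T (x n)) := by
    have h1 : |f n (x m)| < 1 := (hf m n hlt).1
    have h2 : |f n (x n)| > 1 + 1 := (hf m n hlt).2
    have hpt : dist ((T (x m)) n) ((T (x n)) n) ≤ dist (T (x m)) (T (x n)) := by
      have h := BoundedContinuousFunction.dist_coe_le_dist (f := (T (x m)).toBCF)
        (g := (T (x n)).toBCF) n
      rwa [ZeroAtInftyContinuousMap.dist_toBCF_eq_dist] at h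
    have happ : (T (x m)) n = f n (x m) := rfl
    have happ' : (T (x n)) n = f n (x n) := rfl
    rw [happ, happ', Real.dist_eq] at hpt
    have : (1 : ℝ) ≤ |f n (x m) - f n (x n)| := by
      have := abs_sub_abs_le_abs_sub (f n (x n)) (f n (x m))
      rw [abs_sub_comm] at this
      linarith
    linarith
  linarith
end
end

section
/- Let p, q, q' ∈ [1,∞] with q' ≤ q, and let {E_i}_{i∈I} be a non-empty family of locally convex spaces. The product E = ∏_{i∈I} E_i has the p-Gelfand–Phillips sequentially compact property of order (q',q) if and only if every factor E_i has it. -/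
open Filter Topology Set
open scoped ENNReal Pointwise

noncomputable section

variable {E : Type*} [AddCommGroup E] [Module ℝ E] [TopologicalSpace E]

/-- `F` has the `p`-Gelfand–Phillips sequentially compact property of order `(q',q)`. -/
def HasGPscP (p q' q : ℝ≥0∞) (F : Type*) [AddCommGroup F] [Module ℝ F] [TopologicalSpace F] :
    Prop :=
  ∀ x : ℕ → F, WeaklyPSummable p x → PQLimited q' q (Set.range x) →
    Tendsto x atTop (𝓝 (0 : F))

section Aux

variable {F : Type*} [AddCommGroup F] [Module ℝ F] [TopologicalSpace F]

lemma dualNormOn_comp (T : E →L[ℝ] F) (A : Set E) (χ : F →L[ℝ] ℝ) :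
    dualNormOn (T '' A) χ = dualNormOn A (χ.comp T) := by
  unfold dualNormOn
  have h0 : T '' A ∪ {0} = T '' (A ∪ {0}) := by
    rw [image_union, image_singleton, map_zero]
  rw [h0, image_image]
  rfl

lemma weaklyPSummable_comp (T : E →L[ℝ] F) {p : ℝ≥0∞} {x : ℕ → E}
    (hx : WeaklyPSummable p x) : WeaklyPSummable p fun n => T (x n) :=
  fun χ => hx (χ.comp T)

lemma pqLimited_image (T : E →L[ℝ] F) {q' q : ℝ≥0∞} {A : Set E}
    (hA : PQLimited q' q A) : PQLimited q' q (T '' A) := by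
  intro χ hχ
  have h := hA (fun n => (χ n).comp T) (fun x => hχ (T x))
  have heq : (fun n => dualNormOn (T '' A) (χ n))
      = fun n => dualNormOn A ((χ n).comp T) := by
    funext n; exact dualNormOn_comp T A (χ n)
  rw [heq]
  exact h

end Aux

/-- A product of locally convex spaces has the `p`-GPscP of order `(q',q)` iff each factor
does. -/
theorem stmt15 (p q' q : ℝ≥0∞) (hq : q' ≤ q) {I : Type*} [Nonempty I] {E : I → Type*}
    [∀ i, AddCommGroup (E i)] [∀ i, Module ℝ (E i)] [∀ i, TopologicalSpace (E i)]
    [∀ i, IsTopologicalAddGroup (E i)] [∀ i, ContinuousSMul ℝ (E i)]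
    [∀ i, LocallyConvexSpace ℝ (E i)] :
    HasGPscP p q' q (∀ i, E i) ↔ ∀ i, HasGPscP p q' q (E i) := by
  classical
  constructor
  · intro h i x hx hlim
    let T : E i →L[ℝ] ∀ j, E j := ⟨LinearMap.single ℝ E i, continuous_single i⟩
    have hrange : Set.range (fun n => T (x n)) = T '' Set.range x := by
      rw [← Set.range_comp]; rfl
    have key := h (fun n => T (x n)) (weaklyPSummable_comp T hx)
      (by rw [hrange]; exact pqLimited_image T hlim)
    have := ((continuous_apply i).tendsto (0 : ∀ j, E j)).comp key
    have h2 : ∀ n, T (x n) i = x n := fun n => Pi.single_eq_same (M := E) i (x n)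
    exact Tendsto.congr h2 this
  · intro h x hx hlim
    rw [tendsto_pi_nhds]
    intro i
    let T : (∀ j, E j) →L[ℝ] E i := ContinuousLinearMap.proj i
    have hrange : Set.range (fun n => T (x n)) = T '' Set.range x := by
      rw [← Set.range_comp]; rfl
    have key := h i (fun n => T (x n)) (weaklyPSummable_comp T hx)
      (by rw [hrange]; exact pqLimited_image T hlim)
    simpa [T] using key
end
end
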